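/- arXiv:2308.02275 — 4 statements merged into one kernel-verified Lean document; each statement's English description precedes it below -/
import Mathlib

section
/- If M = T(d_1,...,d_n) is a tridiagonal integer matrix with 1s on the secondary diagonals and all diagonal entries d_1,...,d_n ≥ 0, then σ(M) ≥ 0. -/
open Matrix Finset

/-- Tridiagonal real matrix with integer diagonal `d` and 1s on the secondary diagonals. -/
def tri (n : ℕ) (d : Fin n → ℤ) : Matrix (Fin n) (Fin n) ℝ :=
  Matrix.of fun i j =>
    if i = j then (d i : ℝ) else if (i : ℕ) + 1 = j ∨ (j : ℕ) + 1 = i then 1 else 0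

open scoped Classical in
/-- Signature of a real symmetric matrix: number of positive eigenvalues minus
number of negative eigenvalues (0 if the matrix is not symmetric). -/
noncomputable def sig {m : Type*} [Fintype m] [DecidableEq m] (M : Matrix m m ℝ) : ℤ :=
  if h : M.IsHermitian then
    ((Finset.univ.filter fun i => 0 < h.eigenvalues i).card : ℤ) -
      ((Finset.univ.filter fun i => h.eigenvalues i < 0).card : ℤ)
  else 0

open scoped RealInnerProductSpace

lemma dot_eq_inner {n : ℕ} (a b : EuclideanSpace ℝ (Fin n)) :
    (⇑a : Fin n → ℝ) ⬝ᵥ ⇑b = ⟪a, b⟫ := by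
  simp [PiLp.inner_apply, dotProduct, RCLike.inner_apply, mul_comm]

lemma repr_sum {n : ℕ} (x : Fin n → ℝ) (b : OrthonormalBasis (Fin n) ℝ (EuclideanSpace ℝ (Fin n))) :
    x = ∑ j, (⇑(b j) ⬝ᵥ x) • ⇑(b j) := by
  have h := b.sum_repr' ((WithLp.equiv 2 _).symm x)
  have : ∀ j, ⟪b j, (WithLp.equiv 2 (Fin n → ℝ)).symm x⟫ = ⇑(b j) ⬝ᵥ x := by
    intro j
    rw [← dot_eq_inner]
    rfl
  simp_rw [this] at h
  calc x = ⇑((WithLp.equiv 2 (Fin n → ℝ)).symm x) := rfl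
  _ = ⇑(∑ j, (⇑(b j) ⬝ᵥ x) • b j) := by rw [h]
  _ = ∑ j, (⇑(b j) ⬝ᵥ x) • ⇑(b j) := by
      induction (univ : Finset (Fin n)) using Finset.induction with
      | empty => rfl
      | insert hne ih => simp [Finset.sum_insert, *]

lemma sum_dot {ι : Type*} {n : ℕ} (s : Finset ι) (f : ι → (Fin n → ℝ)) (w : Fin n → ℝ) :
    (∑ i ∈ s, f i) ⬝ᵥ w = ∑ i ∈ s, f i ⬝ᵥ w := by
  simp only [dotProduct, Finset.sum_apply, Finset.sum_mul]
  exact Finset.sum_comm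

lemma dot_sum {ι : Type*} {n : ℕ} (s : Finset ι) (f : ι → (Fin n → ℝ)) (w : Fin n → ℝ) :
    w ⬝ᵥ (∑ i ∈ s, f i) = ∑ i ∈ s, w ⬝ᵥ f i := by
  simp only [dotProduct, Finset.sum_apply, Finset.mul_sum]
  exact Finset.sum_comm

lemma quad_sum {n : ℕ} (M : Matrix (Fin n) (Fin n) ℝ) (hM : M.IsHermitian) (x : Fin n → ℝ) :
    x ⬝ᵥ M *ᵥ x = ∑ j, hM.eigenvalues j * (⇑(hM.eigenvectorBasis j) ⬝ᵥ x) ^ 2 := by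
  set b := hM.eigenvectorBasis with hb
  set c : Fin n → ℝ := fun j => ⇑(b j) ⬝ᵥ x with hc
  have horth : ∀ i j, ⇑(b i) ⬝ᵥ ⇑(b j) = if i = j then (1:ℝ) else 0 := by
    intro i j
    rw [dot_eq_inner]
    exact orthonormal_iff_ite.mp b.orthonormal i j
  have hmv : M *ᵥ (∑ j, c j • ⇑(b j)) = ∑ j, (c j * hM.eigenvalues j) • ⇑(b j) := by
    rw [show M *ᵥ (∑ j, c j • ⇑(b j)) = M.mulVecLin (∑ j, c j • ⇑(b j)) from rfl, map_sum]
    refine Finset.sum_congr rfl fun j _ => ?_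
    rw [Matrix.mulVecLin_apply, Matrix.mulVec_smul, hM.mulVec_eigenvectorBasis,
      mul_smul, smul_comm]
  conv_lhs => rw [repr_sum x b]
  rw [← hb, ← hc] at *
  rw [hmv, sum_dot]
  rw [Finset.sum_congr rfl (fun i _ => dot_sum (w := c i • ⇑(b i)) univ _)]
  simp only [smul_dotProduct, dotProduct_smul, horth, smul_eq_mul, mul_ite,
    mul_one, mul_zero, Finset.sum_ite_eq, Finset.mem_univ, if_true]
  apply Finset.sum_congr rfl
  intro j _
  ring

lemma tri_isHermitian (n : ℕ) (d : Fin n → ℤ) : (tri n d).IsHermitian := by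
  ext i j
  simp only [conjTranspose_apply, tri, of_apply, star_trivial]
  by_cases h : j = i
  · subst h; simp
  · simp [h, Ne.symm h, or_comm]

lemma dmd (n : ℕ) (d : Fin n → ℤ) :
    Matrix.diagonal (fun i : Fin n => (-1:ℝ)^(i:ℕ)) * tri n d *
      Matrix.diagonal (fun i : Fin n => (-1:ℝ)^(i:ℕ))
      = Matrix.diagonal (fun i : Fin n => 2*(d i : ℝ)) - tri n d := by
  ext i j
  rw [Matrix.mul_diagonal, Matrix.diagonal_mul, Matrix.sub_apply]
  by_cases h : i = j
  · subst h
    have ht : tri n d i i = (d i : ℝ) := by simp [tri]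
    rw [ht, Matrix.diagonal_apply_eq]
    have hsq : (-1:ℝ)^(i:ℕ) * (d i:ℝ) * (-1:ℝ)^(i:ℕ) = ((-1:ℝ)^(i:ℕ))^2 * d i := by ring
    rw [hsq, ← pow_mul, mul_comm (i:ℕ) 2, pow_mul]
    norm_num
    ring
  · have hdiag : Matrix.diagonal (fun i : Fin n => 2*(d i : ℝ)) i j = 0 :=
      Matrix.diagonal_apply_ne _ h
    rw [hdiag]
    by_cases h2 : (i : ℕ) + 1 = j ∨ (j : ℕ) + 1 = i
    · have hM : tri n d i j = 1 := by simp [tri, h, h2]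
      rw [hM]
      have : (-1:ℝ)^(i:ℕ) * 1 * (-1:ℝ)^(j:ℕ) = (-1:ℝ)^((i:ℕ)+(j:ℕ)) := by
        rw [mul_one, pow_add]
      rw [this]
      have hodd : ¬ Even ((i:ℕ)+(j:ℕ)) := by
        rw [Nat.even_iff]
        rcases h2 with h2 | h2 <;> omega
      rw [(Nat.not_even_iff_odd.mp hodd).neg_one_pow]
      ring
    · have hM : tri n d i j = 0 := by simp [tri, h, h2]
      rw [hM]; ring

lemma exists_mulVec_zero {α β : Type*} [Fintype α] [Fintype β] [DecidableEq α]
    (A : Matrix β α ℝ) (h : Fintype.card β < Fintype.card α) :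
    ∃ c : α → ℝ, c ≠ 0 ∧ A *ᵥ c = 0 := by
  by_contra hcon
  push_neg at hcon
  have hinj : Function.Injective A.mulVecLin := by
    rw [← LinearMap.ker_eq_bot, LinearMap.ker_eq_bot']
    intro c hc
    by_contra hne
    exact hcon c hne (by simpa [Matrix.mulVecLin_apply] using hc)
  have hle := LinearMap.finrank_le_finrank_of_injective hinj
  rw [Module.finrank_fintype_fun_eq_card, Module.finrank_fintype_fun_eq_card] at hle
  omega

lemma dot_basis {n : ℕ} {M : Matrix (Fin n) (Fin n) ℝ} (hM : M.IsHermitian) (i j : Fin n) :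
    ⇑(hM.eigenvectorBasis i) ⬝ᵥ ⇑(hM.eigenvectorBasis j) = if i = j then (1:ℝ) else 0 := by
  rw [dot_eq_inner]
  exact orthonormal_iff_ite.mp hM.eigenvectorBasis.orthonormal i j

lemma key_card {n : ℕ} (d : Fin n → ℤ) (hd : ∀ i, 0 ≤ d i) :
    ((univ.filter fun i => (tri_isHermitian n d).eigenvalues i < 0).card)
      ≤ (univ.filter fun i => 0 < (tri_isHermitian n d).eigenvalues i).card := by
  set hM := tri_isHermitian n d
  set μ := hM.eigenvalues with hμ
  set b := hM.eigenvectorBasis with hb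
  by_contra hlt
  push_neg at hlt
  set D : Matrix (Fin n) (Fin n) ℝ := Matrix.diagonal (fun i : Fin n => (-1:ℝ)^(i:ℕ)) with hD
  set P : Finset (Fin n) := univ.filter (fun i => 0 < μ i) with hP
  set N : Finset (Fin n) := univ.filter (fun i => μ i < 0) with hN
  set A : Matrix ↥P ↥N ℝ :=
    Matrix.of (fun j i => ⇑(b (j:Fin n)) ⬝ᵥ (D *ᵥ ⇑(b (i:Fin n)))) with hA
  obtain ⟨c, hc0, hAc⟩ := exists_mulVec_zero A (by simpa [Fintype.card_coe] using hlt)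
  set x : Fin n → ℝ := ∑ i : ↥N, c i • ⇑(b (i:Fin n)) with hx
  set y : Fin n → ℝ := D *ᵥ x with hy
  have hcoefx : ∀ j : Fin n, ⇑(b j) ⬝ᵥ x = if hj : j ∈ N then c ⟨j, hj⟩ else 0 := by
    intro j
    rw [hx, dot_sum]
    simp only [dotProduct_smul, hb, dot_basis hM, smul_eq_mul, mul_ite, mul_one, mul_zero]
    by_cases hj : j ∈ N
    · rw [dif_pos hj, Finset.sum_eq_single (⟨j, hj⟩ : ↥N)]
      · simp
      · intro i _ hne
        rw [if_neg]
        intro h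
        exact hne (Subtype.ext h.symm)
      · intro h
        exact absurd (Finset.mem_univ _) h
    · rw [dif_neg hj]
      apply Finset.sum_eq_zero
      intro i _
      rw [if_neg]
      intro h
      exact hj (by rw [h]; exact i.2)
  have hmvy : y = ∑ i : ↥N, c i • (D *ᵥ ⇑(b (i:Fin n))) := by
    rw [hy, hx, show D *ᵥ (∑ i : ↥N, c i • ⇑(b (i:Fin n)))
      = D.mulVecLin (∑ i : ↥N, c i • ⇑(b (i:Fin n))) from rfl, map_sum]
    simp [Matrix.mulVecLin_apply, Matrix.mulVec_smul]
  have hcoefy : ∀ j : Fin n, j ∈ P → ⇑(b j) ⬝ᵥ y = 0 := by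
    intro j hj
    rw [hmvy, dot_sum]
    have hstep : ∀ i : ↥N, ⇑(b j) ⬝ᵥ (c i • (D *ᵥ ⇑(b (i:Fin n)))) = A ⟨j, hj⟩ i * c i := by
      intro i
      rw [dotProduct_smul, smul_eq_mul, mul_comm]
      rfl
    rw [Finset.sum_congr rfl fun i _ => hstep i]
    have h0 := congrFun hAc ⟨j, hj⟩
    simpa [Matrix.mulVec, dotProduct] using h0
  obtain ⟨i0, hi0⟩ : ∃ i : ↥N, c i ≠ 0 := by
    by_contra hall
    push_neg at hall
    exact hc0 (funext fun i => hall i)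
  have hqx : x ⬝ᵥ (tri n d) *ᵥ x < 0 := by
    rw [quad_sum _ hM, ← hμ, ← hb]
    have hle : ∀ j ∈ (univ : Finset (Fin n)),
        μ j * (⇑(b j) ⬝ᵥ x)^2 ≤ (0:ℝ) := by
      intro j _
      by_cases hj : j ∈ N
      · have hμj : μ j < 0 := (Finset.mem_filter.mp hj).2
        nlinarith [sq_nonneg (⇑(b j) ⬝ᵥ x)]
      · rw [hcoefx j, dif_neg hj]
        norm_num
    have hstrict : ∃ j ∈ (univ : Finset (Fin n)),
        μ j * (⇑(b j) ⬝ᵥ x)^2 < (0:ℝ) := by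
      refine ⟨(i0 : Fin n), Finset.mem_univ _, ?_⟩
      have hμj : μ (i0 : Fin n) < 0 := (Finset.mem_filter.mp i0.2).2
      have hc : ⇑(b (i0 : Fin n)) ⬝ᵥ x = c i0 := by
        rw [hcoefx, dif_pos i0.2]
      rw [hc]
      have hsq : 0 < (c i0)^2 := lt_of_le_of_ne (sq_nonneg _) (Ne.symm (pow_ne_zero 2 hi0))
      simpa using mul_neg_of_neg_of_pos hμj hsq
    have := Finset.sum_lt_sum hle hstrict
    simpa using this
  have hqy : y ⬝ᵥ (tri n d) *ᵥ y ≤ 0 := by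
    rw [quad_sum _ hM, ← hμ, ← hb]
    apply Finset.sum_nonpos
    intro j _
    by_cases hj : j ∈ P
    · rw [hcoefy j hj]
      norm_num
    · have hμj : μ j ≤ 0 := by
        by_contra hpos
        push_neg at hpos
        exact hj (Finset.mem_filter.mpr ⟨Finset.mem_univ _, hpos⟩)
      nlinarith [sq_nonneg (⇑(b j) ⬝ᵥ y)]
  have hDx : x ᵥ* D = D *ᵥ x := by
    conv_lhs => rw [hD, ← Matrix.diagonal_transpose (fun i : Fin n => (-1:ℝ)^(i:ℕ))]
    rw [Matrix.vecMul_transpose]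
  have hyq : y ⬝ᵥ (tri n d) *ᵥ y
      = x ⬝ᵥ (Matrix.diagonal (fun i : Fin n => 2*(d i:ℝ)) *ᵥ x) - x ⬝ᵥ (tri n d) *ᵥ x := by
    calc y ⬝ᵥ (tri n d) *ᵥ y
        = (x ᵥ* D) ⬝ᵥ ((tri n d * D) *ᵥ x) := by rw [hy, Matrix.mulVec_mulVec, hDx]
      _ = x ⬝ᵥ ((D * tri n d * D) *ᵥ x) := by
          rw [Matrix.dotProduct_mulVec, Matrix.dotProduct_mulVec, Matrix.vecMul_vecMul,
            Matrix.mul_assoc]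
      _ = x ⬝ᵥ (Matrix.diagonal (fun i : Fin n => 2*(d i:ℝ)) *ᵥ x) - x ⬝ᵥ (tri n d) *ᵥ x := by
          rw [hD, dmd, Matrix.sub_mulVec, dotProduct_sub]
  have hdiag : 0 ≤ x ⬝ᵥ (Matrix.diagonal (fun i : Fin n => 2*(d i:ℝ)) *ᵥ x) := by
    simp only [dotProduct]
    apply Finset.sum_nonneg
    intro i _
    rw [Matrix.mulVec_diagonal]
    have hdi : (0:ℝ) ≤ (d i : ℝ) := by exact_mod_cast hd i
    nlinarith [sq_nonneg (x i)]
  linarith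

theorem sig_tri_nonneg (n : ℕ) (d : Fin n → ℤ) (hd : ∀ i, 0 ≤ d i) :
    0 ≤ sig (tri n d) := by
  have hM := tri_isHermitian n d
  simp only [sig, dif_pos hM, sub_nonneg, Nat.cast_le]
  simpa only [Finset.filter_congr_decidable] using key_card d hd
end

section
/- Let M be a tridiagonal matrix T(d_1,...,d_n) with 1s on the secondary diagonals, and let tr⁺(M) denote the sum of the positive diagonal entries. Then σ(M) ≤ 1/2 + tr⁺(M). -/
open Matrix Finset

set_option maxHeartbeats 1000000

open scoped Classical in
noncomputable def pcount {n : ℕ} {M : Matrix (Fin n) (Fin n) ℝ} (h : M.IsHermitian) : ℕ :=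
  (Finset.univ.filter fun i => 0 < h.eigenvalues i).card

open scoped Classical in
noncomputable def qcount {n : ℕ} {M : Matrix (Fin n) (Fin n) ℝ} (h : M.IsHermitian) : ℕ :=
  (Finset.univ.filter fun i => h.eigenvalues i < 0).card

lemma sig_eq {n : ℕ} {M : Matrix (Fin n) (Fin n) ℝ} (h : M.IsHermitian) :
    sig M = (pcount h : ℤ) - qcount h := by
  rw [sig]
  simp only [dif_pos h]
  rfl

lemma eigbasis_dot {n : ℕ} {M : Matrix (Fin n) (Fin n) ℝ} (h : M.IsHermitian) (i j : Fin n) :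
    (h.eigenvectorBasis i : Fin n → ℝ) ⬝ᵥ (h.eigenvectorBasis j : Fin n → ℝ) =
      if i = j then 1 else 0 := by
  have := orthonormal_iff_ite.mp h.eigenvectorBasis.orthonormal i j
  rw [PiLp.inner_apply] at this
  simpa [dotProduct, RCLike.inner_apply, mul_comm] using this

lemma sum_dotProduct' {n : ℕ} {ι : Type*} (t : Finset ι) (f : ι → (Fin n → ℝ)) (x : Fin n → ℝ) :
    (∑ i ∈ t, f i) ⬝ᵥ x = ∑ i ∈ t, f i ⬝ᵥ x := by
  simp only [dotProduct, Finset.sum_apply, Finset.sum_mul]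
  exact Finset.sum_comm

lemma dotProduct_sum' {n : ℕ} {ι : Type*} (t : Finset ι) (f : ι → (Fin n → ℝ)) (x : Fin n → ℝ) :
    x ⬝ᵥ (∑ i ∈ t, f i) = ∑ i ∈ t, x ⬝ᵥ f i := by
  simp only [dotProduct, Finset.sum_apply, Finset.mul_sum]
  exact Finset.sum_comm

lemma exists_span_eig {n : ℕ} {M : Matrix (Fin n) (Fin n) ℝ} (h : M.IsHermitian)
    (s : Finset (Fin n)) :
    ∃ W : Submodule ℝ (Fin n → ℝ), Module.finrank ℝ W = s.card ∧
      ∀ x ∈ W, ∃ c : s → ℝ,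
        (x ≠ 0 → ∃ i, c i ≠ 0) ∧ x ⬝ᵥ M *ᵥ x = ∑ i : s, h.eigenvalues i * c i ^ 2 := by
  set u : Fin n → (Fin n → ℝ) := fun i => (h.eigenvectorBasis i : Fin n → ℝ) with hu
  have hdot : ∀ i j, u i ⬝ᵥ u j = if i = j then 1 else 0 := eigbasis_dot h
  have hmv : ∀ i, M *ᵥ u i = h.eigenvalues i • u i := fun i => h.mulVec_eigenvectorBasis i
  set v : s → (Fin n → ℝ) := fun i => u i with hv
  have hvdot : ∀ i j : s, v i ⬝ᵥ v j = if i = j then 1 else 0 := by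
    intro i j
    rw [hv]; simp only []
    rw [hdot]
    by_cases hij : i = j
    · simp [hij]
    · have : ¬ (i : Fin n) = (j : Fin n) := fun hh => hij (Subtype.ext hh)
      simp [hij, this]
  have hli : LinearIndependent ℝ v := by
    rw [Fintype.linearIndependent_iff]
    intro g hg j
    have h2 := congrArg (fun x => x ⬝ᵥ v j) hg
    rw [sum_dotProduct', zero_dotProduct] at h2
    have h3 : ∀ i : s, (g i • v i) ⬝ᵥ v j = if i = j then g i else 0 := by
      intro i
      rw [smul_dotProduct, hvdot, smul_eq_mul]
      by_cases hij : i = j <;> simp [hij]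
    rw [Finset.sum_congr rfl (fun i _ => h3 i), Finset.sum_ite_eq' Finset.univ j g] at h2
    simpa using h2
  refine ⟨Submodule.span ℝ (Set.range v), ?_, ?_⟩
  · rw [finrank_span_eq_card hli, Fintype.card_coe]
  · intro x hx
    rw [Submodule.mem_span_range_iff_exists_fun] at hx
    obtain ⟨c, hc⟩ := hx
    refine ⟨c, ?_, ?_⟩
    · intro hx0
      by_contra hall
      push_neg at hall
      apply hx0
      rw [← hc]
      simp [hall]
    · rw [← hc]
      have hMv : M *ᵥ (∑ i : s, c i • v i) = ∑ i : s, (h.eigenvalues i * c i) • v i := by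
        rw [show M *ᵥ (∑ i : s, c i • v i) = M.mulVecLin (∑ i : s, c i • v i) from rfl]
        rw [map_sum]
        refine Finset.sum_congr rfl fun i _ => ?_
        rw [_root_.map_smul]
        show c i • (M *ᵥ v i) = _
        rw [hv]; simp only []
        rw [hmv i, smul_smul, mul_comm]
      rw [hMv, sum_dotProduct']
      rw [Finset.sum_congr rfl (fun i _ => dotProduct_sum' _ _ _)]
      have h4 : ∀ i : s, ∀ j : s, (c i • v i) ⬝ᵥ ((h.eigenvalues j * c j) • v j)
          = if j = i then h.eigenvalues i * c i ^ 2 else 0 := by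
        intro i j
        rw [smul_dotProduct, dotProduct_smul, hvdot, smul_eq_mul, smul_eq_mul]
        by_cases hij : i = j
        · subst hij; simp; ring
        · have hji : ¬ j = i := fun hh => hij hh.symm
          simp [hij, hji]
      rw [Finset.sum_congr rfl (fun i _ => Finset.sum_congr rfl (fun j _ => h4 i j))]
      simp

lemma filter_nonneg_card {n : ℕ} {M : Matrix (Fin n) (Fin n) ℝ} (h : M.IsHermitian)
    [DecidablePred fun i => (0:ℝ) ≤ h.eigenvalues i] :
    (Finset.univ.filter fun i => 0 ≤ h.eigenvalues i).card = n - qcount h := by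
  classical
  have h1 : (Finset.univ.filter fun i => h.eigenvalues i < 0).card
      + (Finset.univ.filter fun i => ¬ h.eigenvalues i < 0).card = n := by
    rw [Finset.card_filter_add_card_filter_not]; simp
  have h2 : (Finset.univ.filter fun i => ¬ h.eigenvalues i < 0)
      = (Finset.univ.filter fun i => 0 ≤ h.eigenvalues i) := by
    apply Finset.filter_congr; intro i _; simp [not_lt]
  have h3 : (Finset.univ.filter fun i => h.eigenvalues i < 0).card = qcount h := by
    rw [qcount]
  rw [h2, h3] at h1
  omega

lemma filter_nonpos_card {n : ℕ} {M : Matrix (Fin n) (Fin n) ℝ} (h : M.IsHermitian)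
    [DecidablePred fun i => h.eigenvalues i ≤ (0:ℝ)] :
    (Finset.univ.filter fun i => h.eigenvalues i ≤ 0).card = n - pcount h := by
  classical
  have h1 : (Finset.univ.filter fun i => 0 < h.eigenvalues i).card
      + (Finset.univ.filter fun i => ¬ 0 < h.eigenvalues i).card = n := by
    rw [Finset.card_filter_add_card_filter_not]; simp
  have h2 : (Finset.univ.filter fun i => ¬ 0 < h.eigenvalues i)
      = (Finset.univ.filter fun i => h.eigenvalues i ≤ 0) := by
    apply Finset.filter_congr; intro i _; simp [not_lt]
  have h3 : (Finset.univ.filter fun i => 0 < h.eigenvalues i).card = pcount h := by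
    rw [pcount]
  rw [h2, h3] at h1
  omega

lemma qcount_le_n {n : ℕ} {M : Matrix (Fin n) (Fin n) ℝ} (h : M.IsHermitian) :
    qcount h ≤ n := by
  rw [qcount]
  calc _ ≤ (Finset.univ : Finset (Fin n)).card := Finset.card_filter_le _ _
  _ = n := by simp

lemma pcount_le_n {n : ℕ} {M : Matrix (Fin n) (Fin n) ℝ} (h : M.IsHermitian) :
    pcount h ≤ n := by
  rw [pcount]
  calc _ ≤ (Finset.univ : Finset (Fin n)).card := Finset.card_filter_le _ _
  _ = n := by simp

/-- A negative definite subspace has dimension at most `qcount`. -/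
lemma nd_le_qcount {n : ℕ} {M : Matrix (Fin n) (Fin n) ℝ} (h : M.IsHermitian)
    {W : Submodule ℝ (Fin n → ℝ)} (hW : ∀ x ∈ W, x ≠ 0 → x ⬝ᵥ M *ᵥ x < 0) :
    Module.finrank ℝ W ≤ qcount h := by
  classical
  obtain ⟨U, hUrank, hUform⟩ := exists_span_eig h (Finset.univ.filter fun i => 0 ≤ h.eigenvalues i)
  have hdisj : W ⊓ U = ⊥ := by
    rw [Submodule.eq_bot_iff]
    intro x ⟨hxW, hxU⟩
    by_contra hx0
    have h1 := hW x hxW hx0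
    obtain ⟨c, -, hform⟩ := hUform x hxU
    have h2 : 0 ≤ x ⬝ᵥ M *ᵥ x := by
      rw [hform]
      apply Finset.sum_nonneg
      intro i _
      have : 0 ≤ h.eigenvalues (i : Fin n) := (Finset.mem_filter.mp i.2).2
      positivity
    linarith
  have key := Submodule.finrank_sup_add_finrank_inf_eq W U
  rw [hdisj, finrank_bot] at key
  have hle : Module.finrank ℝ ↥(W ⊔ U) ≤ n := by
    calc _ ≤ Module.finrank ℝ (Fin n → ℝ) := Submodule.finrank_le _
    _ = n := by simp
  have hq := qcount_le_n h
  rw [filter_nonneg_card h] at hUrank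
  omega

/-- Against a negative semidefinite subspace: `pcount + dim W ≤ n`. -/
lemma pcount_add_nsd_le {n : ℕ} {M : Matrix (Fin n) (Fin n) ℝ} (h : M.IsHermitian)
    {W : Submodule ℝ (Fin n → ℝ)} (hW : ∀ x ∈ W, x ⬝ᵥ M *ᵥ x ≤ 0) :
    pcount h + Module.finrank ℝ W ≤ n := by
  classical
  obtain ⟨U, hUrank, hUform⟩ := exists_span_eig h (Finset.univ.filter fun i => 0 < h.eigenvalues i)
  have hdisj : U ⊓ W = ⊥ := by
    rw [Submodule.eq_bot_iff]
    intro x ⟨hxU, hxW⟩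
    by_contra hx0
    have h1 := hW x hxW
    obtain ⟨c, hc0, hform⟩ := hUform x hxU
    obtain ⟨i0, hi0⟩ := hc0 hx0
    have h2 : 0 < x ⬝ᵥ M *ᵥ x := by
      rw [hform]
      apply Finset.sum_pos'
      · intro i _
        have : 0 < h.eigenvalues (i : Fin n) := (Finset.mem_filter.mp i.2).2
        positivity
      · refine ⟨i0, Finset.mem_univ _, ?_⟩
        have h3 : 0 < h.eigenvalues (i0 : Fin n) := (Finset.mem_filter.mp i0.2).2
        have h4 : 0 < c i0 ^ 2 := by positivity
        positivity
    linarith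
  have key := Submodule.finrank_sup_add_finrank_inf_eq U W
  rw [hdisj, finrank_bot] at key
  have hle : Module.finrank ℝ ↥(U ⊔ W) ≤ n := by
    calc _ ≤ Module.finrank ℝ (Fin n → ℝ) := Submodule.finrank_le _
    _ = n := by simp
  have h3 : (Finset.univ.filter fun i => 0 < h.eigenvalues i).card = pcount h := by
    rw [pcount]
  omega

/-- There exists a negative definite subspace of dimension `qcount`. -/
lemma exists_nd {n : ℕ} {M : Matrix (Fin n) (Fin n) ℝ} (h : M.IsHermitian) :
    ∃ W : Submodule ℝ (Fin n → ℝ), Module.finrank ℝ W = qcount h ∧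
      ∀ x ∈ W, x ≠ 0 → x ⬝ᵥ M *ᵥ x < 0 := by
  classical
  obtain ⟨U, hUrank, hUform⟩ := exists_span_eig h (Finset.univ.filter fun i => h.eigenvalues i < 0)
  refine ⟨U, ?_, ?_⟩
  · rw [hUrank, qcount]
  · intro x hx hx0
    obtain ⟨c, hc0, hform⟩ := hUform x hx
    obtain ⟨i0, hi0⟩ := hc0 hx0
    rw [hform]
    have key := Finset.sum_lt_sum (s := (Finset.univ :
        Finset (Finset.univ.filter fun i => h.eigenvalues i < 0)))
      (f := fun i : (Finset.univ.filter fun i => h.eigenvalues i < 0) =>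
        h.eigenvalues i * c i ^ 2) (g := fun _ => (0:ℝ)) ?_ ?_
    · simpa using key
    · intro i _
      show h.eigenvalues (i : Fin n) * c i ^ 2 ≤ 0
      have : h.eigenvalues (i : Fin n) < 0 := (Finset.mem_filter.mp i.2).2
      nlinarith [sq_nonneg (c i)]
    · refine ⟨i0, Finset.mem_univ _, ?_⟩
      show h.eigenvalues (i0 : Fin n) * c i0 ^ 2 < 0
      have h1 : h.eigenvalues (i0 : Fin n) < 0 := (Finset.mem_filter.mp i0.2).2
      have h2 : 0 < c i0 ^ 2 := by positivity
      nlinarith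

/-- There exists a negative semidefinite subspace of dimension `n - pcount`. -/
lemma exists_nsd {n : ℕ} {M : Matrix (Fin n) (Fin n) ℝ} (h : M.IsHermitian) :
    ∃ W : Submodule ℝ (Fin n → ℝ), Module.finrank ℝ W = n - pcount h ∧
      ∀ x ∈ W, x ⬝ᵥ M *ᵥ x ≤ 0 := by
  classical
  obtain ⟨U, hUrank, hUform⟩ := exists_span_eig h (Finset.univ.filter fun i => h.eigenvalues i ≤ 0)
  refine ⟨U, ?_, ?_⟩
  · rw [hUrank, filter_nonpos_card h]
  · intro x hx
    obtain ⟨c, -, hform⟩ := hUform x hx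
    rw [hform]
    apply Finset.sum_nonpos
    intro i _
    have : h.eigenvalues (i : Fin n) ≤ 0 := (Finset.mem_filter.mp i.2).2
    nlinarith [sq_nonneg (c i)]

def triR (n : ℕ) (d : Fin n → ℝ) : Matrix (Fin n) (Fin n) ℝ :=
  Matrix.of fun i j =>
    if i = j then d i else if (i : ℕ) + 1 = j ∨ (j : ℕ) + 1 = i then 1 else 0

lemma triR_isHermitian (n : ℕ) (d : Fin n → ℝ) : (triR n d).IsHermitian := by
  rw [Matrix.IsHermitian]
  ext i j
  simp only [Matrix.conjTranspose_apply, triR, Matrix.of_apply, star_trivial]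
  by_cases h : i = j
  · subst h; simp
  · rw [if_neg h, if_neg (fun hh => h hh.symm)]
    exact if_congr or_comm rfl rfl

lemma QF_eq {n : ℕ} (M : Matrix (Fin n) (Fin n) ℝ) (x : Fin n → ℝ) :
    x ⬝ᵥ M *ᵥ x = ∑ i, ∑ j, x i * (M i j * x j) := by
  simp [dotProduct, Matrix.mulVec, Finset.mul_sum]

lemma QF_zero (M : Matrix (Fin 0) (Fin 0) ℝ) (x : Fin 0 → ℝ) : x ⬝ᵥ M *ᵥ x = 0 := by
  rw [QF_eq]; simp

lemma QF_one (d : Fin 1 → ℝ) (x : Fin 1 → ℝ) :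
    x ⬝ᵥ triR 1 d *ᵥ x = d 0 * x 0 ^ 2 := by
  rw [QF_eq]
  simp [Fin.sum_univ_one, triR]
  ring

lemma triR_succ_succ {n : ℕ} (d : Fin (n + 1) → ℝ) (i j : Fin n) :
    triR (n + 1) d i.succ j.succ = triR n (Fin.tail d) i j := by
  simp only [triR, Matrix.of_apply, Fin.val_succ]
  refine if_congr Fin.succ_inj rfl (if_congr (by omega) rfl rfl)

lemma triR_zero_succ {n : ℕ} (d : Fin (n + 2) → ℝ) (j : Fin (n + 1)) :
    triR (n + 2) d 0 j.succ = if j = 0 then 1 else 0 := by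
  simp only [triR, Matrix.of_apply]
  rw [if_neg (Fin.succ_ne_zero j).symm]
  by_cases hj : j = 0
  · subst hj
    simp
  · rw [if_neg, if_neg hj]
    rintro (h | h)
    · apply hj
      apply Fin.ext
      simp only [Fin.val_succ, Fin.val_zero] at h ⊢
      omega
    · simp only [Fin.val_succ, Fin.val_zero] at h
      omega

lemma triR_succ_zero {n : ℕ} (d : Fin (n + 2) → ℝ) (i : Fin (n + 1)) :
    triR (n + 2) d i.succ 0 = if i = 0 then 1 else 0 := by
  have h1 := triR_zero_succ d i
  have h2 := triR_isHermitian (n+2) d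
  have h3 := congrFun (congrFun h2 i.succ) 0
  rw [Matrix.conjTranspose_apply, star_trivial] at h3
  rw [← h3, h1]

lemma QF_expand {n : ℕ} (d : Fin (n + 2) → ℝ) (x : Fin (n + 2) → ℝ) :
    x ⬝ᵥ triR (n + 2) d *ᵥ x
      = d 0 * x 0 ^ 2
      + (∑ j : Fin (n+1), x 0 * (triR (n+2) d 0 j.succ * x j.succ))
      + (∑ i : Fin (n+1), x i.succ * (triR (n+2) d i.succ 0 * x 0))
      + (∑ i : Fin (n+1), ∑ j : Fin (n+1), x i.succ * (triR (n+2) d i.succ j.succ * x j.succ)) := by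
  rw [QF_eq, Fin.sum_univ_succ]
  have h1 : ∑ j : Fin (n+2), x 0 * (triR (n+2) d 0 j * x j)
      = x 0 * (triR (n+2) d 0 0 * x 0)
        + ∑ j : Fin (n+1), x 0 * (triR (n+2) d 0 j.succ * x j.succ) :=
    Fin.sum_univ_succ _
  have h2 : ∀ i : Fin (n+1), ∑ j : Fin (n+2), x i.succ * (triR (n+2) d i.succ j * x j)
      = x i.succ * (triR (n+2) d i.succ 0 * x 0)
        + ∑ j : Fin (n+1), x i.succ * (triR (n+2) d i.succ j.succ * x j.succ) :=
    fun i => Fin.sum_univ_succ _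
  rw [h1, Finset.sum_congr rfl (fun i (_ : i ∈ Finset.univ) => h2 i), Finset.sum_add_distrib]
  have e00 : triR (n+2) d 0 0 = d 0 := by simp [triR]
  rw [e00]; ring

lemma QF_cons {n : ℕ} (d : Fin (n + 2) → ℝ) (c : ℝ) (y : Fin (n + 1) → ℝ) :
    Fin.cons c y ⬝ᵥ triR (n + 2) d *ᵥ Fin.cons c y
      = d 0 * c ^ 2 + 2 * c * y 0 + y ⬝ᵥ triR (n + 1) (Fin.tail d) *ᵥ y := by
  rw [QF_expand]
  simp only [Fin.cons_zero, Fin.cons_succ]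
  have hsum1 : ∑ j : Fin (n+1), c * (triR (n+2) d 0 j.succ * y j) = c * y 0 := by
    rw [Finset.sum_congr rfl (fun j (_ : j ∈ Finset.univ) => by rw [triR_zero_succ])]
    simp [ite_mul, mul_ite]
  have hsum2 : ∑ i : Fin (n+1), y i * (triR (n+2) d i.succ 0 * c) = y 0 * c := by
    rw [Finset.sum_congr rfl (fun i (_ : i ∈ Finset.univ) => by rw [triR_succ_zero])]
    simp [ite_mul, mul_ite]
  have hsum3 : ∑ i : Fin (n+1), ∑ j : Fin (n+1), y i * (triR (n+2) d i.succ j.succ * y j)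
      = y ⬝ᵥ triR (n + 1) (Fin.tail d) *ᵥ y := by
    rw [QF_eq]
    exact Finset.sum_congr rfl fun i _ => Finset.sum_congr rfl fun j _ => by
      rw [triR_succ_succ]
  rw [hsum1, hsum2, hsum3]
  ring

lemma triR_update {n : ℕ} (f : Fin n → ℝ) (i : Fin n) (v : ℝ) :
    triR n (Function.update f i v) = triR n f + Matrix.single i i (v - f i) := by
  ext a b
  simp only [Matrix.add_apply, triR, Matrix.of_apply, Matrix.single]
  by_cases hab : a = b
  · subst hab
    by_cases hai : i = a
    · subst hai
      simp [Function.update_self]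
    · simp [Function.update_of_ne (fun hh => hai hh.symm), hai]
  · have h2 : ¬ (i = a ∧ i = b) := fun ⟨h1', h2'⟩ => hab (h1' ▸ h2')
    simp [hab, h2]

lemma QF_update {n : ℕ} (f : Fin n → ℝ) (i : Fin n) (v : ℝ) (y : Fin n → ℝ) :
    y ⬝ᵥ triR n (Function.update f i v) *ᵥ y
      = y ⬝ᵥ triR n f *ᵥ y + (v - f i) * y i ^ 2 := by
  rw [triR_update, Matrix.add_mulVec, dotProduct_add, Matrix.single_mulVec]
  congr 1
  simp only [dotProduct, Function.update_apply, Pi.zero_apply, mul_ite, mul_zero]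
  rw [Finset.sum_ite_eq' Finset.univ i]
  simp
  ring

lemma finrank_sup_of_disjoint {n : ℕ} (A B : Submodule ℝ (Fin n → ℝ))
    (h : ∀ x, x ∈ A → x ∈ B → x = 0) :
    Module.finrank ℝ ↥(A ⊔ B) = Module.finrank ℝ A + Module.finrank ℝ B := by
  have hbot : A ⊓ B = ⊥ := by
    rw [Submodule.eq_bot_iff]; exact fun x hx => h x hx.1 hx.2
  have key := Submodule.finrank_sup_add_finrank_inf_eq A B
  rw [hbot, finrank_bot] at key
  omega

lemma finrank_map_inj {n m : ℕ} (J : (Fin m → ℝ) →ₗ[ℝ] (Fin n → ℝ))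
    (hJ : Function.Injective J) (W : Submodule ℝ (Fin m → ℝ)) :
    Module.finrank ℝ ↥(Submodule.map J W) = Module.finrank ℝ ↥W :=
  (LinearEquiv.finrank_eq (Submodule.equivMapOfInjective J hJ W)).symm

/-- `y ↦ Fin.cons (c0 * y 0) y` as a linear map. -/
def J1 {m : ℕ} (c0 : ℝ) : (Fin (m + 1) → ℝ) →ₗ[ℝ] (Fin (m + 2) → ℝ) where
  toFun y := Fin.cons (c0 * y 0) y
  map_add' y z := by
    funext k
    refine Fin.cases ?_ (fun k => ?_) k
    · simp only [Fin.cons_zero, Pi.add_apply, Fin.cons_zero]; ring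
    · simp [Fin.cons_succ]
  map_smul' c y := by
    funext k
    refine Fin.cases ?_ (fun k => ?_) k
    · simp only [Fin.cons_zero, Pi.smul_apply, Fin.cons_zero, RingHom.id_apply, smul_eq_mul]; ring
    · simp [Fin.cons_succ]

lemma J1_apply {m : ℕ} (c0 : ℝ) (y : Fin (m+1) → ℝ) : J1 c0 y = Fin.cons (c0 * y 0) y := rfl

lemma J1_inj {m : ℕ} (c0 : ℝ) : Function.Injective (J1 (m := m) c0) := by
  intro y z h
  have := congrArg Fin.tail h
  simpa [J1_apply, Fin.tail_cons] using this

lemma tail_tail_zero_eq_two {m : ℕ} (d : Fin (m+3) → ℝ) : Fin.tail (Fin.tail d) 0 = d 2 := by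
  show d ((0 : Fin (m+1)).succ).succ = d 2
  congr 1

lemma tail_zero_eq_one {m : ℕ} (d : Fin (m+2) → ℝ) : Fin.tail d 0 = d 1 := by
  show d (0 : Fin (m+1)).succ = d 1
  congr 1

lemma block1 {n : ℕ} (d : Fin (n+2) → ℝ) (ha : d 0 ≠ 0) :
    sig (triR (n+2) d) ≤ (if 0 < d 0 then 1 else -1)
      + sig (triR (n+1) (Function.update (Fin.tail d) 0 (d 1 - 1 / d 0))) := by
  set a := d 0 with hadef
  set e := Function.update (Fin.tail d) 0 (d 1 - 1 / a) with he
  set M := triR (n+2) d with hMdef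
  set N := triR (n+1) e with hNdef
  have hM := triR_isHermitian (n+2) d
  have hN := triR_isHermitian (n+1) e
  set J : (Fin (n+1) → ℝ) →ₗ[ℝ] (Fin (n+2) → ℝ) := J1 (-(1/a)) with hJdef
  have hJinj : Function.Injective J := J1_inj _
  set e0 : Fin (n+2) → ℝ := Fin.cons 1 0 with he0
  have hQN : ∀ y : Fin (n+1) → ℝ,
      y ⬝ᵥ N *ᵥ y = y ⬝ᵥ triR (n+1) (Fin.tail d) *ᵥ y - (1/a) * y 0 ^ 2 := by
    intro y
    rw [hNdef, he, QF_update, tail_zero_eq_one]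
    ring
  have hxeq : ∀ (t : ℝ) (y : Fin (n+1) → ℝ),
      t • e0 + J y = Fin.cons (t + (-(1/a)) * y 0) y := by
    intro t y
    funext k
    refine Fin.cases ?_ (fun k => ?_) k
    · show t * 1 + J y 0 = _
      simp only [hJdef, J1_apply, Fin.cons_zero]
      ring
    · show t * (0:ℝ) + J y k.succ = _
      simp only [hJdef, J1_apply, Fin.cons_succ]
      ring
  have hQ : ∀ (t : ℝ) (y : Fin (n+1) → ℝ),
      (t • e0 + J y) ⬝ᵥ M *ᵥ (t • e0 + J y) = a * t ^ 2 + y ⬝ᵥ N *ᵥ y := by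
    intro t y
    rw [hxeq, hMdef, QF_cons, hQN y]
    field_simp
    ring
  have hQJ : ∀ y : Fin (n+1) → ℝ, (J y) ⬝ᵥ M *ᵥ (J y) = y ⬝ᵥ N *ᵥ y := by
    intro y
    have h0 : (0:ℝ) • e0 + J y = J y := by simp
    have := hQ 0 y
    rw [h0] at this
    rw [this]
    ring
  obtain ⟨W0, hW0rank, hW0nsd⟩ := exists_nsd hN
  obtain ⟨W1, hW1rank, hW1nd⟩ := exists_nd hN
  have hpN := pcount_le_n hN
  have hqN := qcount_le_n hN
  rw [sig_eq hM, sig_eq hN]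
  by_cases hapos : 0 < a
  · rw [if_pos hapos]
    -- pcount M ≤ pcount N + 1, qcount M ≥ qcount N
    have hnsd : ∀ x ∈ Submodule.map J W0, x ⬝ᵥ M *ᵥ x ≤ 0 := by
      rintro x ⟨y, hy, rfl⟩
      rw [hQJ]
      exact hW0nsd y hy
    have hp := pcount_add_nsd_le hM hnsd
    rw [finrank_map_inj J hJinj, hW0rank] at hp
    have hnd : ∀ x ∈ Submodule.map J W1, x ≠ 0 → x ⬝ᵥ M *ᵥ x < 0 := by
      rintro x ⟨y, hy, rfl⟩ hx0
      rw [hQJ]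
      refine hW1nd y hy ?_
      rintro rfl
      simp at hx0
    have hq := nd_le_qcount hM hnd
    rw [finrank_map_inj J hJinj, hW1rank] at hq
    push_cast
    omega
  · rw [if_neg hapos]
    have haneg : a < 0 := lt_of_le_of_ne (not_lt.mp hapos) ha
    have hdisj : ∀ x, x ∈ (ℝ ∙ e0) → ∀ y : Fin (n+1) → ℝ, x = J y → x = 0 := by
      intro x hx y hxy
      obtain ⟨t, rfl⟩ := Submodule.mem_span_singleton.mp hx
      have hy0 : y = 0 := by
        have h1 : Fin.tail (t • e0) = Fin.tail (J y) := congrArg Fin.tail hxy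
        have h2 : Fin.tail (J y) = y := by
          funext k; simp [hJdef, J1_apply, Fin.tail, Fin.cons_succ]
        have h3 : Fin.tail (t • e0) = 0 := by
          funext k; simp [he0, Fin.tail, Fin.cons_succ]
        rw [h3, h2] at h1; exact h1.symm
      rw [hxy, hy0, map_zero]
    -- NSD : span e0 ⊔ map J W0
    have hnsd : ∀ x ∈ (ℝ ∙ e0) ⊔ Submodule.map J W0, x ⬝ᵥ M *ᵥ x ≤ 0 := by
      intro x hx
      obtain ⟨u, hu, v, hv, rfl⟩ := Submodule.mem_sup.mp hx
      obtain ⟨t, rfl⟩ := Submodule.mem_span_singleton.mp hu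
      obtain ⟨y, hy, rfl⟩ := Submodule.mem_map.mp hv
      rw [hQ]
      have h1 : a * t ^ 2 ≤ 0 := by nlinarith [sq_nonneg t]
      have h2 := hW0nsd y hy
      linarith
    have hp := pcount_add_nsd_le hM hnsd
    rw [finrank_sup_of_disjoint _ _ (by
      rintro x hx ⟨y, hy, rfl⟩
      exact hdisj _ hx y rfl)] at hp
    rw [finrank_map_inj J hJinj, hW0rank] at hp
    have he0ne : e0 ≠ 0 := by
      intro hh
      have := congrFun hh 0
      simp [he0] at this
    rw [finrank_span_singleton he0ne] at hp
    -- ND : span e0 ⊔ map J W1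
    have hnd : ∀ x ∈ (ℝ ∙ e0) ⊔ Submodule.map J W1, x ≠ 0 → x ⬝ᵥ M *ᵥ x < 0 := by
      intro x hx hx0
      obtain ⟨u, hu, v, hv, rfl⟩ := Submodule.mem_sup.mp hx
      obtain ⟨t, rfl⟩ := Submodule.mem_span_singleton.mp hu
      obtain ⟨y, hy, rfl⟩ := Submodule.mem_map.mp hv
      rw [hQ]
      by_cases hy0 : y = 0
      · subst hy0
        have ht : t ≠ 0 := by
          rintro rfl
          simp at hx0
        have h1 : a * t ^ 2 < 0 := by
          have : 0 < t ^ 2 := by positivity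
          nlinarith
        have h2 : (0 : Fin (n+1) → ℝ) ⬝ᵥ N *ᵥ (0 : Fin (n+1) → ℝ) = 0 := by simp
        rw [h2]
        linarith
      · have h1 : a * t ^ 2 ≤ 0 := by nlinarith [sq_nonneg t]
        have h2 := hW1nd y hy hy0
        linarith
    have hq := nd_le_qcount hM hnd
    rw [finrank_sup_of_disjoint _ _ (by
      rintro x hx ⟨y, hy, rfl⟩
      exact hdisj _ hx y rfl)] at hq
    rw [finrank_map_inj J hJinj, hW1rank] at hq
    have he0ne : e0 ≠ 0 := by
      intro hh
      have := congrFun hh 0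
      simp [he0] at this
    rw [finrank_span_singleton he0ne] at hq
    push_cast
    omega

lemma neg_vec_of_det_neg {a b : ℝ} (hdet : a * b - 1 < 0) :
    ∃ w0 w1 : ℝ, a * w0 ^ 2 + 2 * w0 * w1 + b * w1 ^ 2 < 0 ∧ ¬(w0 = 0 ∧ w1 = 0) := by
  rcases lt_trichotomy a 0 with h | h | h
  · exact ⟨1, 0, by nlinarith, by simp⟩
  · refine ⟨-(b+1)/2, 1, by subst h; ring_nf; nlinarith, by rintro ⟨-, h1⟩; exact one_ne_zero h1⟩
  · exact ⟨1, -a, by nlinarith, by rintro ⟨h1, -⟩; exact one_ne_zero h1⟩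

lemma QF_two (d : Fin 2 → ℝ) (x : Fin 2 → ℝ) :
    x ⬝ᵥ triR 2 d *ᵥ x = d 0 * x 0 ^ 2 + 2 * x 0 * x 1 + d 1 * x 1 ^ 2 := by
  rw [QF_eq]
  rw [Fin.sum_univ_two]
  rw [Fin.sum_univ_two, Fin.sum_univ_two]
  have h00 : triR 2 d 0 0 = d 0 := by simp [triR]
  have h11 : triR 2 d 1 1 = d 1 := by simp [triR]
  have h01 : triR 2 d 0 1 = 1 := by
    simp only [triR, Matrix.of_apply]
    norm_num
  have h10 : triR 2 d 1 0 = 1 := by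
    simp only [triR, Matrix.of_apply]
    norm_num
  rw [h00, h01, h10, h11]
  ring

lemma block2a (d : Fin 2 → ℝ) (hdet : d 0 * d 1 - 1 < 0) : sig (triR 2 d) ≤ 0 := by
  obtain ⟨w0, w1, hw, hwne⟩ := neg_vec_of_det_neg hdet
  set u : Fin 2 → ℝ := ![w0, w1] with hu
  have hune : u ≠ 0 := by
    intro hh
    exact hwne ⟨by rw [← show u 0 = w0 from rfl, hh]; rfl,
                by rw [← show u 1 = w1 from rfl, hh]; rfl⟩
  have hM := triR_isHermitian 2 d
  have hQ : ∀ t : ℝ, (t • u) ⬝ᵥ triR 2 d *ᵥ (t • u)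
      = t ^ 2 * (d 0 * w0 ^ 2 + 2 * w0 * w1 + d 1 * w1 ^ 2) := by
    intro t
    rw [QF_two]
    have h0 : (t • u) 0 = t * w0 := by simp [hu]
    have h1 : (t • u) 1 = t * w1 := by simp [hu]
    rw [h0, h1]
    ring
  have hnsd : ∀ x ∈ (ℝ ∙ u), x ⬝ᵥ triR 2 d *ᵥ x ≤ 0 := by
    intro x hx
    obtain ⟨t, rfl⟩ := Submodule.mem_span_singleton.mp hx
    rw [hQ]
    nlinarith [sq_nonneg t]
  have hnd : ∀ x ∈ (ℝ ∙ u), x ≠ 0 → x ⬝ᵥ triR 2 d *ᵥ x < 0 := by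
    intro x hx hx0
    obtain ⟨t, rfl⟩ := Submodule.mem_span_singleton.mp hx
    have ht : t ≠ 0 := by
      rintro rfl
      simp at hx0
    rw [hQ]
    have h2 : 0 < t ^ 2 := by positivity
    nlinarith
  have hp := pcount_add_nsd_le hM hnsd
  have hq := nd_le_qcount hM hnd
  rw [finrank_span_singleton hune] at hp hq
  rw [sig_eq hM]
  omega

/-- `y ↦ Fin.cons (c0 * y 0) (Fin.cons (c1 * y 0) y)` as a linear map. -/
def J2 {m : ℕ} (c0 c1 : ℝ) : (Fin (m + 1) → ℝ) →ₗ[ℝ] (Fin (m + 3) → ℝ) where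
  toFun y := Fin.cons (c0 * y 0) (Fin.cons (c1 * y 0) y)
  map_add' y z := by
    funext k
    refine Fin.cases ?_ (fun k => ?_) k
    · simp only [Fin.cons_zero, Pi.add_apply]; ring
    · simp only [Fin.cons_succ, Pi.add_apply]
      refine Fin.cases ?_ (fun k2 => ?_) k
      · simp only [Fin.cons_zero, Pi.add_apply]; ring
      · simp only [Fin.cons_succ, Pi.add_apply]
  map_smul' c y := by
    funext k
    refine Fin.cases ?_ (fun k => ?_) k
    · simp only [Fin.cons_zero, Pi.smul_apply, RingHom.id_apply, smul_eq_mul]; ring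
    · simp only [Fin.cons_succ, Pi.smul_apply, RingHom.id_apply, smul_eq_mul]
      refine Fin.cases ?_ (fun k2 => ?_) k
      · simp only [Fin.cons_zero, Pi.smul_apply, smul_eq_mul]; ring
      · simp only [Fin.cons_succ, Pi.smul_apply, smul_eq_mul]

lemma J2_apply {m : ℕ} (c0 c1 : ℝ) (y : Fin (m+1) → ℝ) :
    J2 c0 c1 y = Fin.cons (c0 * y 0) (Fin.cons (c1 * y 0) y) := rfl

lemma J2_inj {m : ℕ} (c0 c1 : ℝ) : Function.Injective (J2 (m := m) c0 c1) := by
  intro y z h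
  have h2 := congrArg (fun w => Fin.tail (Fin.tail w)) h
  simpa [J2_apply, Fin.tail_cons] using h2

lemma block2b {m : ℕ} (d : Fin (m+3) → ℝ) (hdet : d 0 * d 1 - 1 < 0) :
    sig (triR (m+3) d) ≤ sig (triR (m+1)
      (Function.update (Fin.tail (Fin.tail d)) 0 (d 2 - d 0 / (d 0 * d 1 - 1)))) := by
  obtain ⟨w0, w1, hw, hwne⟩ := neg_vec_of_det_neg hdet
  set a := d 0 with hadef
  set b := d 1 with hbdef
  have hdne : a * b - 1 ≠ 0 := ne_of_lt hdet
  set e := Function.update (Fin.tail (Fin.tail d)) 0 (d 2 - a / (a * b - 1)) with he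
  set M := triR (m+3) d with hMdef
  set N := triR (m+1) e with hNdef
  have hM := triR_isHermitian (m+3) d
  have hN := triR_isHermitian (m+1) e
  set J : (Fin (m+1) → ℝ) →ₗ[ℝ] (Fin (m+3) → ℝ) := J2 (1/(a*b-1)) (-a/(a*b-1)) with hJdef
  have hJinj : Function.Injective J := J2_inj _ _
  set u : Fin (m+3) → ℝ := Fin.cons w0 (Fin.cons w1 0) with hu
  have hune : u ≠ 0 := by
    intro hh
    refine hwne ⟨?_, ?_⟩
    · have := congrFun hh 0
      simpa [hu] using this
    · have := congrFun hh 1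
      rw [hu] at this
      rw [show ((1 : Fin (m+3))) = (0 : Fin (m+2)).succ from by ext; simp] at this
      simpa using this
  have hQN : ∀ y : Fin (m+1) → ℝ,
      y ⬝ᵥ N *ᵥ y = y ⬝ᵥ triR (m+1) (Fin.tail (Fin.tail d)) *ᵥ y
        - (a / (a*b-1)) * y 0 ^ 2 := by
    intro y
    rw [hNdef, he, QF_update, tail_tail_zero_eq_two]
    ring
  have hxeq : ∀ (t : ℝ) (y : Fin (m+1) → ℝ),
      t • u + J y = Fin.cons (t * w0 + (1/(a*b-1)) * y 0)
        (Fin.cons (t * w1 + (-a/(a*b-1)) * y 0) y) := by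
    intro t y
    funext k
    refine Fin.cases ?_ (fun k => ?_) k
    · show t * u 0 + J y 0 = _
      simp only [hu, hJdef, J2_apply, Fin.cons_zero]
    · show t * u k.succ + J y k.succ = _
      simp only [hu, hJdef, J2_apply, Fin.cons_succ]
      refine Fin.cases ?_ (fun k2 => ?_) k
      · simp only [Fin.cons_zero, Pi.zero_apply]
      · simp only [Fin.cons_succ, Pi.zero_apply]; ring
  have hQ : ∀ (t : ℝ) (y : Fin (m+1) → ℝ),
      (t • u + J y) ⬝ᵥ M *ᵥ (t • u + J y)
        = t ^ 2 * (a * w0 ^ 2 + 2 * w0 * w1 + b * w1 ^ 2) + y ⬝ᵥ N *ᵥ y := by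
    intro t y
    rw [hxeq, hMdef, QF_cons, QF_cons, hQN y, tail_zero_eq_one]
    simp only [Fin.cons_zero]
    rw [← hadef, ← hbdef]
    field_simp
    ring
  have hdisj : ∀ x, x ∈ (ℝ ∙ u) → ∀ y : Fin (m+1) → ℝ, x = J y → x = 0 := by
    intro x hx y hxy
    obtain ⟨t, rfl⟩ := Submodule.mem_span_singleton.mp hx
    have hy0 : y = 0 := by
      have h1 : Fin.tail (Fin.tail (t • u)) = Fin.tail (Fin.tail (J y)) :=
        congrArg (fun w => Fin.tail (Fin.tail w)) hxy
      have h2 : Fin.tail (Fin.tail (J y)) = y := by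
        funext k; simp [hJdef, J2_apply, Fin.tail, Fin.cons_succ]
      have h3 : Fin.tail (Fin.tail (t • u)) = 0 := by
        funext k; simp [hu, Fin.tail, Fin.cons_succ]
      rw [h3, h2] at h1; exact h1.symm
    rw [hxy, hy0, map_zero]
  obtain ⟨W0, hW0rank, hW0nsd⟩ := exists_nsd hN
  obtain ⟨W1, hW1rank, hW1nd⟩ := exists_nd hN
  have hpN := pcount_le_n hN
  have hqN := qcount_le_n hN
  rw [sig_eq hM, sig_eq hN]
  have hnsd : ∀ x ∈ (ℝ ∙ u) ⊔ Submodule.map J W0, x ⬝ᵥ M *ᵥ x ≤ 0 := by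
    intro x hx
    obtain ⟨u', hu', v, hv, rfl⟩ := Submodule.mem_sup.mp hx
    obtain ⟨t, rfl⟩ := Submodule.mem_span_singleton.mp hu'
    obtain ⟨y, hy, rfl⟩ := Submodule.mem_map.mp hv
    rw [hQ]
    have h1 : t ^ 2 * (a * w0 ^ 2 + 2 * w0 * w1 + b * w1 ^ 2) ≤ 0 := by
      nlinarith [sq_nonneg t]
    have h2 := hW0nsd y hy
    linarith
  have hp := pcount_add_nsd_le hM hnsd
  rw [finrank_sup_of_disjoint _ _ (by
    rintro x hx ⟨y, hy, rfl⟩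
    exact hdisj _ hx y rfl)] at hp
  rw [finrank_map_inj J hJinj, hW0rank, finrank_span_singleton hune] at hp
  have hnd : ∀ x ∈ (ℝ ∙ u) ⊔ Submodule.map J W1, x ≠ 0 → x ⬝ᵥ M *ᵥ x < 0 := by
    intro x hx hx0
    obtain ⟨u', hu', v, hv, rfl⟩ := Submodule.mem_sup.mp hx
    obtain ⟨t, rfl⟩ := Submodule.mem_span_singleton.mp hu'
    obtain ⟨y, hy, rfl⟩ := Submodule.mem_map.mp hv
    rw [hQ]
    by_cases hy0 : y = 0
    · have ht : t ≠ 0 := by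
        rintro rfl
        apply hx0
        rw [hy0, map_zero, zero_smul, zero_add]
      have h2 : y ⬝ᵥ N *ᵥ y = 0 := by rw [hy0]; simp
      rw [h2]
      have h3 : 0 < t ^ 2 := by positivity
      nlinarith
    · have h1 : t ^ 2 * (a * w0 ^ 2 + 2 * w0 * w1 + b * w1 ^ 2) ≤ 0 := by
        nlinarith [sq_nonneg t]
      have h2 := hW1nd y hy hy0
      linarith
  have hq := nd_le_qcount hM hnd
  rw [finrank_sup_of_disjoint _ _ (by
    rintro x hx ⟨y, hy, rfl⟩
    exact hdisj _ hx y rfl)] at hq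
  rw [finrank_map_inj J hJinj, hW1rank, finrank_span_singleton hune] at hq
  omega

lemma update_zero_eq_cons {k : ℕ} (f : Fin (k+1) → ℝ) (v : ℝ) :
    Function.update f 0 v = Fin.cons v (Fin.tail f) := by
  funext j
  refine Fin.cases ?_ (fun j => ?_) j
  · simp
  · simp [Function.update_of_ne (Fin.succ_ne_zero j), Fin.tail]

lemma sig_one_nonpos (d : Fin 1 → ℝ) (hd : d 0 ≤ 0) : sig (triR 1 d) ≤ 0 := by
  have hM := triR_isHermitian 1 d
  have hnsd : ∀ x ∈ (⊤ : Submodule ℝ (Fin 1 → ℝ)), x ⬝ᵥ triR 1 d *ᵥ x ≤ 0 := by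
    intro x _
    rw [QF_one]
    nlinarith [sq_nonneg (x 0)]
  have hp := pcount_add_nsd_le hM hnsd
  have htop : Module.finrank ℝ (⊤ : Submodule ℝ (Fin 1 → ℝ)) = 1 := by
    rw [finrank_top]; simp
  rw [htop] at hp
  rw [sig_eq hM]
  have := qcount_le_n hM
  omega

lemma sig_le_pcount {n : ℕ} {M : Matrix (Fin n) (Fin n) ℝ} (h : M.IsHermitian) :
    sig M ≤ (pcount h : ℤ) := by
  rw [sig_eq h]; omega

lemma main_claim : ∀ n : ℕ, ∀ a : ℝ, ∀ z : Fin n → ℤ,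
    2 * sig (triR (n+1) (Fin.cons a (fun i => (z i : ℝ))))
      ≤ 1 + max ⌈a⌉ 0 + ∑ i, max (z i) 0 := by
  intro n
  induction n using Nat.strong_induction_on with
  | _ n IH =>
  intro a z
  cases n with
  | zero =>
    have hsum : ∑ i : Fin 0, max (z i) 0 = 0 := by simp
    set d : Fin 1 → ℝ := Fin.cons a (fun i => (z i : ℝ)) with hd
    change 2 * sig (triR 1 d) ≤ 1 + max ⌈a⌉ 0 + ∑ i : Fin 0, max (z i) 0
    rw [hsum]
    have hd0 : d 0 = a := by simp [hd]
    rcases le_or_gt a 0 with ha | ha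
    · have h1 := sig_one_nonpos d (by rw [hd0]; exact ha)
      have h2 : (0:ℤ) ≤ max ⌈a⌉ 0 := le_max_right _ _
      omega
    · have h1 := sig_le_pcount (triR_isHermitian 1 d)
      have h2 := pcount_le_n (triR_isHermitian 1 d)
      have h3 : 0 < ⌈a⌉ := Int.ceil_pos.mpr ha
      have h4 : max ⌈a⌉ 0 = ⌈a⌉ := max_eq_left (le_of_lt h3)
      omega
  | succ m =>
    set zc : Fin (m+1) → ℝ := fun i => (z i : ℝ) with hzc
    set d : Fin (m+2) → ℝ := Fin.cons a zc with hd
    change 2 * sig (triR (m+2) d) ≤ 1 + max ⌈a⌉ 0 + ∑ i : Fin (m+1), max (z i) 0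
    have hd0 : d 0 = a := by simp [hd]
    have htail : Fin.tail d = zc := by rw [hd]; simp
    have hd1 : d 1 = (z 0 : ℝ) := by
      rw [← tail_zero_eq_one d, htail]
    have hsum : (∑ i : Fin (m+1), max (z i) 0)
        = max (z 0) 0 + ∑ i : Fin m, max (z i.succ) 0 := Fin.sum_univ_succ _
    have hsnn : (0:ℤ) ≤ ∑ i : Fin m, max (z i.succ) 0 :=
      Finset.sum_nonneg fun i _ => le_max_right _ _
    have hupd : a ≠ 0 → Function.update (Fin.tail d) 0 (d 1 - 1 / d 0)
        = Fin.cons ((z 0 : ℝ) - 1/a) (fun i => ((z i.succ : ℤ) : ℝ)) := by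
      intro _
      rw [update_zero_eq_cons, htail, hd1, hd0]
      congr 1 <;> (try (funext i; simp [hzc, Fin.tail]))
    -- one-step consequence
    have honestep : a ≠ 0 →
        sig (triR (m+2) d) ≤ (if 0 < a then 1 else -1)
          + sig (triR (m+1) (Fin.cons ((z 0 : ℝ) - 1/a) (fun i => ((z i.succ : ℤ) : ℝ)))) := by
      intro ha
      have hb1 := block1 d (by rw [hd0]; exact ha)
      rw [hupd ha, hd0] at hb1
      exact hb1
    have hIH1 := IH m (Nat.lt_succ_self m) ((z 0 : ℝ) - 1/a) (fun i => z i.succ)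
    rw [hsum]
    rcases lt_trichotomy a 0 with haneg | ha0 | hapos
    · -- a < 0
      have hane : a ≠ 0 := ne_of_lt haneg
      rcases lt_or_ge (a * (z 0 : ℝ)) 1 with hab | hab
      · -- C4 : two-step, det < 0
        have hdet : d 0 * d 1 - 1 < 0 := by rw [hd0, hd1]; linarith
        cases m with
        | zero =>
          have h2a := block2a d hdet
          have h1 : (0:ℤ) ≤ max ⌈a⌉ 0 := le_max_right _ _
          have h2 : (0:ℤ) ≤ max (z 0) 0 := le_max_right _ _
          have hs0 : ∑ i : Fin 0, max (z i.succ) 0 = 0 := by simp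
          rw [hs0]
          have hc2 : sig (triR (0+2) d) = sig (triR 2 d) := rfl
          omega
        | succ k =>
          have h2b := block2b d hdet
          have hd2 : d 2 = (z 1 : ℝ) := by
            rw [← tail_tail_zero_eq_two d]
            have h5 : Fin.tail (Fin.tail d) = Fin.tail zc := by rw [htail]
            rw [h5, tail_zero_eq_one]
          have hupd2 : Function.update (Fin.tail (Fin.tail d)) 0
              (d 2 - d 0 / (d 0 * d 1 - 1))
              = Fin.cons ((z 1 : ℝ) - a / (a * (z 0:ℝ) - 1))
                (fun i => ((z i.succ.succ : ℤ) : ℝ)) := by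
            rw [update_zero_eq_cons, hd2, hd0, hd1]
            have h5 : Fin.tail (Fin.tail (Fin.tail d)) = Fin.tail (Fin.tail zc) := by
              rw [htail]
            rw [h5]
            congr 1 <;> (try (funext i; simp [hzc, Fin.tail]))
          rw [hupd2] at h2b
          have hIH2 := IH k (by omega) ((z 1 : ℝ) - a / (a * (z 0:ℝ) - 1))
            (fun i => z i.succ.succ)
          have hdet' : a * (z 0:ℝ) - 1 < 0 := by linarith
          have hsgn : 0 < a / (a * (z 0:ℝ) - 1) := div_pos_of_neg_of_neg haneg hdet'
          have hceil : ⌈(z 1 : ℝ) - a / (a * (z 0:ℝ) - 1)⌉ ≤ z 1 := by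
            apply Int.ceil_le.mpr
            push_cast
            linarith
          have hsum2 : (∑ i : Fin (k+1), max (z i.succ) 0)
              = max (z (0 : Fin (k+1)).succ) 0 + ∑ i : Fin k, max (z i.succ.succ) 0 :=
            Fin.sum_univ_succ _
          rw [hsum2]
          have hc3 : sig (triR (k+1+2) d) = sig (triR (k+3) d) := rfl
          have hzz : z ((0 : Fin (k+1)).succ) = z 1 := by rw [Fin.succ_zero_eq_one]
          have h1 : (0:ℤ) ≤ max ⌈a⌉ 0 := le_max_right _ _
          have h2 : (0:ℤ) ≤ max (z 0) 0 := le_max_right _ _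
          omega
      · -- C5 : one-step, a < 0, a*b ≥ 1
        have hone := honestep hane
        rw [if_neg (not_lt.mpr (le_of_lt haneg))] at hone
        have hceil : ⌈(z 0 : ℝ) - 1/a⌉ ≤ 0 := by
          apply Int.ceil_le.mpr
          push_cast
          have h6 : a * (1/a) = 1 := by field_simp
          nlinarith [h6]
        have h1 : (0:ℤ) ≤ max ⌈a⌉ 0 := le_max_right _ _
        have h2 : (0:ℤ) ≤ max (z 0) 0 := le_max_right _ _
        omega
    · -- a = 0 : two-step with det = -1
      have hdet : d 0 * d 1 - 1 < 0 := by rw [hd0, ha0]; simp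
      cases m with
      | zero =>
        have h2a := block2a d hdet
        have h1 : (0:ℤ) ≤ max ⌈a⌉ 0 := le_max_right _ _
        have h2 : (0:ℤ) ≤ max (z 0) 0 := le_max_right _ _
        have hs0 : ∑ i : Fin 0, max (z i.succ) 0 = 0 := by simp
        rw [hs0]
        have hc2 : sig (triR (0+2) d) = sig (triR 2 d) := rfl
        omega
      | succ k =>
        have h2b := block2b d hdet
        have hd2 : d 2 = (z 1 : ℝ) := by
          rw [← tail_tail_zero_eq_two d]
          have h5 : Fin.tail (Fin.tail d) = Fin.tail zc := by rw [htail]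
          rw [h5, tail_zero_eq_one]
        have hupd2 : Function.update (Fin.tail (Fin.tail d)) 0
            (d 2 - d 0 / (d 0 * d 1 - 1))
            = Fin.cons ((z 1 : ℝ) - a / (a * (z 0:ℝ) - 1))
              (fun i => ((z i.succ.succ : ℤ) : ℝ)) := by
          rw [update_zero_eq_cons, hd2, hd0, hd1]
          have h5 : Fin.tail (Fin.tail (Fin.tail d)) = Fin.tail (Fin.tail zc) := by
            rw [htail]
          rw [h5]
          congr 1 <;> (try (funext i; simp [hzc, Fin.tail]))
        rw [hupd2] at h2b
        have hIH2 := IH k (by omega) ((z 1 : ℝ) - a / (a * (z 0:ℝ) - 1))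
          (fun i => z i.succ.succ)
        have hceil : ⌈(z 1 : ℝ) - a / (a * (z 0:ℝ) - 1)⌉ ≤ z 1 := by
          apply Int.ceil_le.mpr
          push_cast
          rw [ha0]
          simp
        have hsum2 : (∑ i : Fin (k+1), max (z i.succ) 0)
            = max (z (0 : Fin (k+1)).succ) 0 + ∑ i : Fin k, max (z i.succ.succ) 0 :=
          Fin.sum_univ_succ _
        rw [hsum2]
        have hc3 : sig (triR (k+1+2) d) = sig (triR (k+3) d) := rfl
        have hzz : z ((0 : Fin (k+1)).succ) = z 1 := by rw [Fin.succ_zero_eq_one]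
        have h1 : (0:ℤ) ≤ max ⌈a⌉ 0 := le_max_right _ _
        have h2 : (0:ℤ) ≤ max (z 0) 0 := le_max_right _ _
        omega
    · -- a > 0
      have hane : a ≠ 0 := ne_of_gt hapos
      have hcle : 0 < ⌈a⌉ := Int.ceil_pos.mpr hapos
      by_cases h2c : 2 ≤ ⌈a⌉
      · -- one-step, ⌈a⌉ ≥ 2
        have hone := honestep hane
        rw [if_pos hapos] at hone
        have h1a : 0 < 1/a := by positivity
        have hceil1 : ⌈(z 0:ℝ) - 1/a⌉ ≤ z 0 := by
          apply Int.ceil_le.mpr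
          push_cast
          linarith
        omega
      · have hclee : ⌈a⌉ = 1 := by omega
        have hale : a ≤ 1 := by
          have := Int.le_ceil a
          rw [hclee] at this
          exact_mod_cast this
        have h1a : 1 ≤ 1/a := by
          rw [le_div_iff₀ hapos]
          linarith
        by_cases hz0 : 1 ≤ z 0
        · -- one-step, z 0 ≥ 1
          have hone := honestep hane
          rw [if_pos hapos] at hone
          have hceil1 : ⌈(z 0:ℝ) - 1/a⌉ ≤ z 0 - 1 := by
            apply Int.ceil_le.mpr
            push_cast
            linarith
          omega
        · -- C2 : two-step
          push_neg at hz0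
          have hz0' : z 0 ≤ 0 := by omega
          have hz0r : (z 0 : ℝ) ≤ 0 := by exact_mod_cast hz0'
          have hdet : d 0 * d 1 - 1 < 0 := by
            rw [hd0, hd1]
            nlinarith
          cases m with
          | zero =>
            have h2a := block2a d hdet
            have h1 : (0:ℤ) ≤ max ⌈a⌉ 0 := le_max_right _ _
            have h2 : (0:ℤ) ≤ max (z 0) 0 := le_max_right _ _
            have hs0 : ∑ i : Fin 0, max (z i.succ) 0 = 0 := by simp
            rw [hs0]
            have hc2 : sig (triR (0+2) d) = sig (triR 2 d) := rfl
            omega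
          | succ k =>
            have h2b := block2b d hdet
            have hd2 : d 2 = (z 1 : ℝ) := by
              rw [← tail_tail_zero_eq_two d]
              have h5 : Fin.tail (Fin.tail d) = Fin.tail zc := by rw [htail]
              rw [h5, tail_zero_eq_one]
            have hupd2 : Function.update (Fin.tail (Fin.tail d)) 0
                (d 2 - d 0 / (d 0 * d 1 - 1))
                = Fin.cons ((z 1 : ℝ) - a / (a * (z 0:ℝ) - 1))
                  (fun i => ((z i.succ.succ : ℤ) : ℝ)) := by
              rw [update_zero_eq_cons, hd2, hd0, hd1]
              have h5 : Fin.tail (Fin.tail (Fin.tail d)) = Fin.tail (Fin.tail zc) := by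
                rw [htail]
              rw [h5]
              congr 1 <;> (try (funext i; simp [hzc, Fin.tail]))
            rw [hupd2] at h2b
            have hIH2 := IH k (by omega) ((z 1 : ℝ) - a / (a * (z 0:ℝ) - 1))
              (fun i => z i.succ.succ)
            have hdet' : a * (z 0:ℝ) - 1 < 0 := by nlinarith
            have hbd : -(1:ℝ) ≤ a / (a * (z 0:ℝ) - 1) := by
              rw [le_div_iff_of_neg hdet']
              nlinarith
            have hceil : ⌈(z 1 : ℝ) - a / (a * (z 0:ℝ) - 1)⌉ ≤ z 1 + 1 := by
              apply Int.ceil_le.mpr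
              push_cast
              linarith
            have hsum2 : (∑ i : Fin (k+1), max (z i.succ) 0)
                = max (z (0 : Fin (k+1)).succ) 0 + ∑ i : Fin k, max (z i.succ.succ) 0 :=
              Fin.sum_univ_succ _
            rw [hsum2]
            have hc3 : sig (triR (k+1+2) d) = sig (triR (k+3) d) := rfl
            have hzz : z ((0 : Fin (k+1)).succ) = z 1 := by rw [Fin.succ_zero_eq_one]
            have h2 : (0:ℤ) ≤ max (z 0) 0 := le_max_right _ _
            omega

lemma sig_fin_zero (M : Matrix (Fin 0) (Fin 0) ℝ) : sig M = 0 := by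
  have h : M.IsHermitian := by
    ext i j
    exact i.elim0
  rw [sig, dif_pos h]
  simp

theorem sig_tri_le_half_postrace (n : ℕ) (d : Fin n → ℤ) :
    (sig (tri n d) : ℚ) ≤
      1 / 2 + (∑ i ∈ Finset.univ.filter (fun i => 0 < d i), (d i : ℚ)) / 2 := by
  have hs : (∑ i ∈ Finset.univ.filter (fun i => 0 < d i), (d i : ℚ))
      = ((∑ i, max (d i) 0 : ℤ) : ℚ) := by
    rw [Finset.sum_filter]
    push_cast
    apply Finset.sum_congr rfl
    intro i _
    by_cases h : 0 < d i
    · rw [if_pos h, max_eq_left]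
      exact_mod_cast le_of_lt h
    · rw [if_neg h, max_eq_right]
      exact_mod_cast (by omega : d i ≤ 0)
  rw [hs]
  cases n with
  | zero =>
    rw [show tri 0 d = triR 0 (fun i => ((d i : ℤ) : ℝ)) from rfl, sig_fin_zero]
    have h0 : (∑ i : Fin 0, max (d i) 0) = 0 := by simp
    rw [h0]
    norm_num
  | succ m =>
    have hdiag : (Fin.cons ((d 0 : ℤ) : ℝ) (fun i : Fin m => ((Fin.tail d i : ℤ) : ℝ)))
        = fun i => ((d i : ℤ) : ℝ) := by
      funext i
      refine Fin.cases ?_ (fun j => ?_) i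
      · simp
      · simp [Fin.tail]
    have key := main_claim m ((d 0 : ℤ) : ℝ) (Fin.tail d)
    rw [hdiag, Int.ceil_intCast] at key
    have hconv : (∑ i : Fin m, max (Fin.tail d i) 0) = ∑ i : Fin m, max (d i.succ) 0 := rfl
    have hsum : (∑ i : Fin (m+1), max (d i) 0)
        = max (d 0) 0 + ∑ i : Fin m, max (d i.succ) 0 := Fin.sum_univ_succ _
    have htri : tri (m+1) d = triR (m+1) (fun i => ((d i : ℤ) : ℝ)) := rfl
    rw [htri]
    have key2 : 2 * sig (triR (m+1) (fun i => ((d i : ℤ) : ℝ)))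
        ≤ 1 + ∑ i : Fin (m+1), max (d i) 0 := by omega
    have h3 : (2:ℚ) * ((sig (triR (m+1) (fun i => ((d i : ℤ) : ℝ))) : ℤ) : ℚ)
        ≤ 1 + ((∑ i : Fin (m+1), max (d i) 0 : ℤ) : ℚ) := by exact_mod_cast key2
    linarith
end

section
/- Let a, b ≥ 1 with a + b ≥ 3, and let M = T(2^a, 1, 2^b) be the (a+b+1)×(a+b+1) tridiagonal matrix whose diagonal consists of a copies of 2, then a 1, then b copies of 2, with 1s on the secondary diagonals. Then M is congruent over ℚ to a diagonal matrix with entries 2/1,...,(a+1)/a, x, (b+1)/b,...,2/1, where x = 1 - a/(a+1) - b/(b+1) < 0. In particular σ(M) = a + b - 1. -/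
open Matrix

/-- Tridiagonal rational matrix with diagonal `d` and 1s on the secondary diagonals. -/
def triQ (n : ℕ) (d : Fin n → ℚ) : Matrix (Fin n) (Fin n) ℚ :=
  Matrix.of fun i j =>
    if i = j then d i else if (i : ℕ) + 1 = j ∨ (j : ℕ) + 1 = i then 1 else 0

open scoped Classical in
/-- Signature of a rational symmetric matrix, computed via the eigenvalues of the
corresponding real matrix. -/
noncomputable def sigQ {n : ℕ} (M : Matrix (Fin n) (Fin n) ℚ) : ℤ :=
  if h : (M.map (fun x : ℚ => (x : ℝ))).IsHermitian then
    ((Finset.univ.filter fun i => 0 < h.eigenvalues i).card : ℤ) -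
      ((Finset.univ.filter fun i => h.eigenvalues i < 0).card : ℤ)
  else 0

section Aux
open Finset Module


lemma sylvester_le {n : ℕ} (d e : Fin n → ℝ) (P : Matrix (Fin n) (Fin n) ℝ)
    (hP : IsUnit P.det) (h : Matrix.diagonal e = Pᵀ * Matrix.diagonal d * P) :
    (Finset.univ.filter fun i => 0 < e i).card ≤ (Finset.univ.filter fun i => 0 < d i).card := by
  by_contra hc
  push_neg at hc
  set S : Finset (Fin n) := Finset.univ.filter (fun i => 0 < e i) with hS
  set T : Finset (Fin n) := Finset.univ.filter (fun i => 0 < d i) with hT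
  -- projections
  let π1 : (Fin n → ℝ) →ₗ[ℝ] (↥(Sᶜ) → ℝ) := LinearMap.funLeft ℝ ℝ Subtype.val
  let π2 : (Fin n → ℝ) →ₗ[ℝ] (↥T → ℝ) := LinearMap.funLeft ℝ ℝ Subtype.val
  have hπ1 : Function.Surjective π1 :=
    LinearMap.funLeft_surjective_of_injective ℝ ℝ _ Subtype.val_injective
  have hπ2 : Function.Surjective π2 :=
    LinearMap.funLeft_surjective_of_injective ℝ ℝ _ Subtype.val_injective
  have hrank1 := LinearMap.finrank_range_add_finrank_ker π1
  have hrank2 := LinearMap.finrank_range_add_finrank_ker π2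
  rw [LinearMap.range_eq_top.mpr hπ1, finrank_top] at hrank1
  rw [LinearMap.range_eq_top.mpr hπ2, finrank_top] at hrank2
  simp only [Module.finrank_fintype_fun_eq_card, Fintype.card_coe, Fintype.card_fin] at hrank1 hrank2
  have hinv : Invertible P := P.invertibleOfIsUnitDet hP
  let eP : (Fin n → ℝ) ≃ₗ[ℝ] (Fin n → ℝ) := P.toLinearEquiv' hinv
  have hePapp : ∀ v, eP v = P.mulVec v := by
    intro v
    show (P.toLinearEquiv' hinv : (Fin n → ℝ) →ₗ[ℝ] (Fin n → ℝ)) v = _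
    rw [Matrix.toLinearEquiv'_apply]
    exact Matrix.toLin'_apply P v
  let W1 := LinearMap.ker π1
  let W2 := Submodule.map (eP.symm : (Fin n → ℝ) →ₗ[ℝ] (Fin n → ℝ)) (LinearMap.ker π2)
  have hW2 : finrank ℝ W2 = finrank ℝ (LinearMap.ker π2) :=
    LinearEquiv.finrank_map_eq eP.symm _
  have hsum := Submodule.finrank_sup_add_finrank_inf_eq W1 W2
  have hsup : finrank ℝ ↥(W1 ⊔ W2) ≤ n := by
    have := Submodule.finrank_le (W1 ⊔ W2)
    simpa [Module.finrank_fintype_fun_eq_card] using this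
  have hSc : (Sᶜ).card = n - S.card := by simp [Finset.card_compl]
  have hScard : S.card ≤ n := by simpa using Finset.card_le_univ S
  have hTcard : T.card ≤ n := by simpa using Finset.card_le_univ T
  have hW1eq : finrank ℝ ↥W1 = finrank ℝ ↥(LinearMap.ker π1) := rfl
  have hpos : 0 < finrank ℝ ↥(W1 ⊓ W2) := by omega
  have : Nontrivial ↥(W1 ⊓ W2) := Module.nontrivial_of_finrank_pos hpos
  obtain ⟨x, hx⟩ := exists_ne (0 : ↥(W1 ⊓ W2))
  have hx1 : (x : Fin n → ℝ) ∈ W1 := x.2.1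
  have hx2 : (x : Fin n → ℝ) ∈ W2 := x.2.2
  have hxne : (x : Fin n → ℝ) ≠ 0 := by
    simpa [Submodule.coe_eq_zero] using hx
  set v : Fin n → ℝ := (x : Fin n → ℝ) with hv
  -- v vanishes outside S
  have hvS : ∀ i : Fin n, i ∉ S → v i = 0 := by
    intro i hi
    have := LinearMap.mem_ker.mp hx1
    have := congrFun this ⟨i, by simpa using hi⟩
    simpa [π1, LinearMap.funLeft_apply] using this
  -- P.mulVec v vanishes on T
  have hvT : ∀ i : Fin n, i ∈ T → P.mulVec v i = 0 := by
    intro i hi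
    have h2 : eP v ∈ LinearMap.ker π2 := by
      have := (Submodule.mem_map_equiv (p := LinearMap.ker π2) (e := eP.symm)).mp hx2
      simpa using this
    have := congrFun (LinearMap.mem_ker.mp h2) ⟨i, hi⟩
    rw [hePapp] at this
    simpa [π2, LinearMap.funLeft_apply] using this
  -- quadratic form positive
  have hq1 : 0 < v ⬝ᵥ (Matrix.diagonal e).mulVec v := by
    have hform : v ⬝ᵥ (Matrix.diagonal e).mulVec v = ∑ i : Fin n, e i * (v i)^2 := by
      simp only [dotProduct, Matrix.mulVec_diagonal]
      exact Finset.sum_congr rfl fun i _ => by ring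
    rw [hform]
    obtain ⟨i, hi⟩ := Function.ne_iff.mp hxne
    have hiS : i ∈ S := by
      by_contra hiS
      exact hi (hvS i hiS)
    apply Finset.sum_pos'
    · intro j _
      by_cases hj : j ∈ S
      · have : 0 < e j := by simpa [hS] using hj
        positivity
      · rw [hvS j hj]; ring_nf; simp
    · refine ⟨i, Finset.mem_univ i, ?_⟩
      have he : 0 < e i := by simpa [hS] using hiS
      have hi' : v i ≠ 0 := by simpa using hi
      have h2 : (0:ℝ) < (v i)^2 := by positivity
      exact mul_pos he h2
  -- quadratic form nonpositive
  have hq2 : v ⬝ᵥ (Matrix.diagonal e).mulVec v ≤ 0 := by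
    rw [h, Matrix.mul_assoc, ← Matrix.mulVec_mulVec, ← Matrix.mulVec_mulVec,
      dotProduct_mulVec, Matrix.vecMul_transpose]
    set y := P.mulVec v with hy
    have hform : y ⬝ᵥ (Matrix.diagonal d).mulVec y = ∑ i : Fin n, d i * (y i)^2 := by
      simp only [dotProduct, Matrix.mulVec_diagonal]
      exact Finset.sum_congr rfl fun i _ => by ring
    rw [hform]
    apply Finset.sum_nonpos
    intro i _
    by_cases hi : i ∈ T
    · rw [hvT i hi]; ring_nf; simp
    · have : d i ≤ 0 := by
        by_contra hd
        exact hi (by simpa [hT] using not_le.mp hd)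
      have h2 : (0:ℝ) ≤ (y i)^2 := sq_nonneg _
      exact mul_nonpos_of_nonpos_of_nonneg this h2
  linarith


lemma congr_reverse {n : ℕ} (d e : Fin n → ℝ) (P : Matrix (Fin n) (Fin n) ℝ)
    (hP : IsUnit P.det) (h : Matrix.diagonal e = Pᵀ * Matrix.diagonal d * P) :
    Matrix.diagonal d = (P⁻¹)ᵀ * Matrix.diagonal e * P⁻¹ := by
  rw [h]
  have h1 : P * P⁻¹ = 1 := Matrix.mul_nonsing_inv P hP
  have h2 : (P⁻¹)ᵀ * Pᵀ = 1 := by rw [← Matrix.transpose_mul, h1, Matrix.transpose_one]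
  calc Matrix.diagonal d = ((P⁻¹)ᵀ * Pᵀ) * Matrix.diagonal d * (P * P⁻¹) := by
        rw [h1, h2, Matrix.one_mul, Matrix.mul_one]
    _ = (P⁻¹)ᵀ * (Pᵀ * Matrix.diagonal d * P) * P⁻¹ := by
        simp only [Matrix.mul_assoc]

lemma sylvester_count {n : ℕ} (d e : Fin n → ℝ) (P : Matrix (Fin n) (Fin n) ℝ)
    (hP : IsUnit P.det) (h : Matrix.diagonal e = Pᵀ * Matrix.diagonal d * P) :
    (Finset.univ.filter fun i => 0 < e i).card = (Finset.univ.filter fun i => 0 < d i).card ∧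
    (Finset.univ.filter fun i => e i < 0).card = (Finset.univ.filter fun i => d i < 0).card := by
  have hPinv : IsUnit (P⁻¹).det := by
    have h1 : P * P⁻¹ = 1 := Matrix.mul_nonsing_inv P hP
    exact Matrix.isUnit_det_of_left_inverse h1
  have hrev := congr_reverse d e P hP h
  constructor
  · exact le_antisymm (sylvester_le d e P hP h) (sylvester_le e d P⁻¹ hPinv hrev)
  · have hneg : Matrix.diagonal (fun i => -e i) = Pᵀ * Matrix.diagonal (fun i => -d i) * P := by
      have key : ∀ (v : Fin n → ℝ), Matrix.diagonal (fun i => -v i) = -Matrix.diagonal v :=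
        fun v => by ext i j; by_cases hij : i = j <;> simp [hij]
      rw [key e, key d, h, Matrix.mul_neg, Matrix.neg_mul]
    have hnegrev := congr_reverse (fun i => -d i) (fun i => -e i) P hP hneg
    have e1 := le_antisymm (sylvester_le (fun i => -d i) (fun i => -e i) P hP hneg)
      (sylvester_le (fun i => -e i) (fun i => -d i) P⁻¹ hPinv hnegrev)
    simpa only [neg_pos] using e1

lemma eig_count {n : ℕ} (A : Matrix (Fin n) (Fin n) ℝ) (hA : A.IsHermitian)
    (e : Fin n → ℝ) (Q : Matrix (Fin n) (Fin n) ℝ) (hQ : IsUnit Q.det)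
    (h : Matrix.diagonal e = Qᵀ * A * Q) :
    (Finset.univ.filter fun i => 0 < hA.eigenvalues i).card
        = (Finset.univ.filter fun i => 0 < e i).card ∧
    (Finset.univ.filter fun i => hA.eigenvalues i < 0).card
        = (Finset.univ.filter fun i => e i < 0).card := by
  set U : Matrix (Fin n) (Fin n) ℝ := (hA.eigenvectorUnitary : Matrix (Fin n) (Fin n) ℝ) with hU
  have hspec : star U * A * U = Matrix.diagonal (RCLike.ofReal ∘ hA.eigenvalues) :=
    by rw [← hA.conjStarAlgAut_star_eigenvectorUnitary, Unitary.conjStarAlgAut_star_apply]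
  have hod : (RCLike.ofReal ∘ hA.eigenvalues : Fin n → ℝ) = hA.eigenvalues := rfl
  rw [hod] at hspec
  have hstar : star U = Uᵀ := by
    rw [Matrix.star_eq_conjTranspose, Matrix.conjTranspose_eq_transpose_of_trivial]
  have hUdet : IsUnit U.det := by
    apply Matrix.isUnit_det_of_left_inverse (B := star U)
    exact (Matrix.mem_unitaryGroup_iff').mp hA.eigenvectorUnitary.2
  -- A = (Q⁻¹)ᵀ * diagonal e * Q⁻¹
  have hArep : A = (Q⁻¹)ᵀ * Matrix.diagonal e * Q⁻¹ := by
    have h1 : Q * Q⁻¹ = 1 := Matrix.mul_nonsing_inv Q hQ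
    have h2 : (Q⁻¹)ᵀ * Qᵀ = 1 := by rw [← Matrix.transpose_mul, h1, Matrix.transpose_one]
    calc A = ((Q⁻¹)ᵀ * Qᵀ) * A * (Q * Q⁻¹) := by rw [h1, h2, Matrix.one_mul, Matrix.mul_one]
      _ = (Q⁻¹)ᵀ * (Qᵀ * A * Q) * Q⁻¹ := by simp only [Matrix.mul_assoc]
      _ = (Q⁻¹)ᵀ * Matrix.diagonal e * Q⁻¹ := by rw [← h]
  have hcongr : Matrix.diagonal hA.eigenvalues = (Q⁻¹ * U)ᵀ * Matrix.diagonal e * (Q⁻¹ * U) := by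
    rw [← hspec, hstar, hArep, Matrix.transpose_mul]
    simp only [Matrix.mul_assoc]
  have hdet : IsUnit (Q⁻¹ * U).det := by
    rw [Matrix.det_mul]
    exact (Matrix.isUnit_nonsing_inv_det Q hQ).mul hUdet
  exact sylvester_count e hA.eigenvalues (Q⁻¹ * U) hdet hcongr


def pe (a b i j : ℕ) : ℚ :=
  if i ≤ j ∧ j ≤ a then (-1)^(i+j) * ((i:ℚ)+1) / ((j:ℚ)+1)
  else if a ≤ j ∧ j ≤ i then (-1)^(i+j) * ((a+b+1-i : ℕ) : ℚ) / ((a+b+1-j : ℕ) : ℚ)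
  else 0

def cl (a i : ℕ) : ℚ := if i < a then ((i:ℚ)+1)/((i:ℚ)+2) else 0

def cr (a b i : ℕ) : ℚ :=
  if a < i then ((a+b+1-i : ℕ) : ℚ)/(((a+b+1-i : ℕ) : ℚ)+1) else 0

def el (a b i k : ℕ) : ℚ :=
  (if k = i then 1 else 0) + (if k = i+1 then cl a i else 0) + (if k+1 = i then cr a b i else 0)

def emm (a i k : ℕ) : ℚ :=
  (if k = i then (if i = a then 1 else 2) else 0) + (if k = i+1 then 1 else 0)
    + (if k+1 = i then 1 else 0)

def dd (a b j : ℕ) : ℚ :=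
  if j < a then ((j:ℚ)+2)/((j:ℚ)+1)
  else if j = a then 1 - (a:ℚ)/((a:ℚ)+1) - (b:ℚ)/((b:ℚ)+1)
  else (((a+b+1-j:ℕ):ℚ)+1)/((a+b+1-j:ℕ):ℚ)

lemma pe_left (a b : ℕ) {i j : ℕ} (h1 : i ≤ j) (h2 : j ≤ a) :
    pe a b i j = (-1)^(i+j) * ((i:ℚ)+1) / ((j:ℚ)+1) := by
  unfold pe; rw [if_pos ⟨h1, h2⟩]

lemma pe_right (a b : ℕ) {i j : ℕ} (h1 : a ≤ j) (h2 : j ≤ i) :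
    pe a b i j = (-1)^(i+j) * ((a+b+1-i : ℕ) : ℚ) / ((a+b+1-j : ℕ) : ℚ) := by
  unfold pe
  by_cases hc : i ≤ j ∧ j ≤ a
  · have hja : j = a := le_antisymm hc.2 h1
    have hia : i = a := le_antisymm (hja ▸ hc.1) (hja ▸ h2)
    rw [if_pos hc, hia, hja]
    have e1 : a+b+1-a = b+1 := by omega
    rw [e1]
    have d1 : ((a:ℚ)+1) ≠ 0 := by positivity
    have d2 : ((b+1:ℕ):ℚ) ≠ 0 := by positivity
    rw [mul_div_assoc, mul_div_assoc, div_self d1, div_self d2]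
  · rw [if_neg hc, if_pos ⟨h1, h2⟩]

lemma pe_zero (a b : ℕ) {i j : ℕ} (h1 : ¬(i ≤ j ∧ j ≤ a)) (h2 : ¬(a ≤ j ∧ j ≤ i)) :
    pe a b i j = 0 := by
  unfold pe; rw [if_neg h1, if_neg h2]

lemma tri_sum (n : ℕ) (c0 c1 c2 : ℚ) (i : ℕ) (f : ℕ → ℚ) (hi : i < n) :
    ∑ m ∈ Finset.range n,
      ((if m = i then c0 else 0) + (if m = i+1 then c1 else 0) + (if m+1 = i then c2 else 0)) * f m
      = c0 * f i + (if i+1 < n then c1 * f (i+1) else 0)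
        + (if 1 ≤ i then c2 * f (i-1) else 0) := by
  simp only [add_mul]
  rw [Finset.sum_add_distrib, Finset.sum_add_distrib]
  congr 1
  · congr 1
    · rw [Finset.sum_eq_single_of_mem i (Finset.mem_range.mpr hi)]
      · simp
      · intro m _ hm; simp [hm]
    · by_cases h2 : i+1 < n
      · rw [if_pos h2, Finset.sum_eq_single_of_mem (i+1) (Finset.mem_range.mpr h2)]
        · simp
        · intro m _ hm; simp [hm]
      · rw [if_neg h2]
        apply Finset.sum_eq_zero; intro m hm
        have hmne : m ≠ i+1 := by have := Finset.mem_range.mp hm; omega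
        simp [hmne]
  · rcases Nat.eq_zero_or_pos i with rfl | h0
    · rw [if_neg (by omega)]
      apply Finset.sum_eq_zero; intro m _; simp
    · rw [if_pos (show 1 ≤ i by omega), Finset.sum_eq_single_of_mem (i-1) (Finset.mem_range.mpr (by omega))]
      · rw [if_pos (by omega)]
      · intro m _ hm; rw [if_neg (by omega), zero_mul]

lemma lp_sum (a b : ℕ) (ha : 1 ≤ a) (hb : 1 ≤ b) (i j : ℕ) (hi : i < a+b+1)
    (hj : j < a+b+1) :
    ∑ m ∈ Finset.range (a+b+1), el a b i m * pe a b m j = if i = j then 1 else 0 := by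
  rw [show (∑ m ∈ Finset.range (a+b+1), el a b i m * pe a b m j)
      = 1 * pe a b i j + (if i+1 < a+b+1 then cl a i * pe a b (i+1) j else 0)
        + (if 1 ≤ i then cr a b i * pe a b (i-1) j else 0) from by
    simpa only [el] using tri_sum (a+b+1) 1 (cl a i) (cr a b i) i (fun m => pe a b m j) hi]
  rw [one_mul]
  rcases lt_trichotomy i a with hia | hia | hia
  · -- i < a
    have hcr : cr a b i = 0 := by unfold cr; rw [if_neg (by omega)]
    have hcl : cl a i = ((i:ℚ)+1)/((i:ℚ)+2) := by unfold cl; rw [if_pos hia]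
    rw [if_pos (show i+1 < a+b+1 by omega), hcr, hcl]
    simp only [zero_mul, ite_self, add_zero]
    rcases lt_trichotomy j i with hji | rfl | hji
    · rw [pe_zero a b (by omega) (by omega), pe_zero a b (by omega) (by omega),
        if_neg (by omega)]
      ring
    · rw [pe_left a b (le_refl _) (by omega), pe_zero a b (by omega) (by omega),
        if_pos rfl, mul_zero, add_zero, ← two_mul, pow_mul]
      norm_num
      exact Nat.cast_add_one_ne_zero j
    · by_cases hja : j ≤ a
      · rw [pe_left a b (by omega) hja, pe_left a b (by omega) hja, if_neg (by omega),
          show i+1+j = (i+j)+1 by ring, pow_succ]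
        have d1 : ((j:ℚ)+1) ≠ 0 := by positivity
        have d2 : ((i:ℚ)+2) ≠ 0 := by positivity
        push_cast
        field_simp
        ring
      · rw [pe_zero a b (by omega) (by omega), pe_zero a b (by omega) (by omega),
          if_neg (by omega)]
        ring
  · -- i = a
    have hcl : cl a i = 0 := by unfold cl; rw [if_neg (by omega)]
    have hcr : cr a b i = 0 := by unfold cr; rw [if_neg (by omega)]
    rw [hcl, hcr]
    simp only [zero_mul, ite_self, add_zero]
    by_cases hja : i = j
    · subst hja
      rw [pe_left a b (le_refl _) (by omega), if_pos rfl, ← two_mul, pow_mul]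
      norm_num
      exact Nat.cast_add_one_ne_zero i
    · rw [pe_zero a b (by omega) (by omega), if_neg hja]
  · -- a < i
    obtain ⟨i', rfl⟩ : ∃ i', i = i'+1 := ⟨i-1, by omega⟩
    have hcl : cl a (i'+1) = 0 := by unfold cl; rw [if_neg (by omega)]
    have hcr : cr a b (i'+1)
        = ((a+b+1-(i'+1):ℕ):ℚ)/(((a+b+1-(i'+1):ℕ):ℚ)+1) := by
      unfold cr; rw [if_pos (by omega)]
    rw [hcl, if_pos (show 1 ≤ i'+1 by omega)]
    simp only [zero_mul, ite_self, add_zero, Nat.add_sub_cancel]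
    rcases lt_trichotomy j (i'+1) with hji | hji | hji
    · by_cases hja : a ≤ j
      · rw [pe_right a b hja (by omega), pe_right a b hja (by omega), hcr,
          if_neg (by omega)]
        have r1 : ((a+b+1-i':ℕ):ℚ) = ((a+b+1-(i'+1):ℕ):ℚ) + 1 := by
          rw [show a+b+1-i' = (a+b+1-(i'+1))+1 by omega]; push_cast; ring
        rw [r1, show i'+1+j = (i'+j)+1 by ring, pow_succ]
        have d1 : ((a+b+1-j:ℕ):ℚ) ≠ 0 := Nat.cast_ne_zero.mpr (by omega)
        have d2 : ((a+b+1-(i'+1):ℕ):ℚ) + 1 ≠ 0 := by positivity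
        field_simp
        ring
      · rw [pe_zero a b (by omega) (by omega), pe_zero a b (by omega) (by omega),
          if_neg (by omega)]
        ring
    · subst hji
      rw [pe_right a b (by omega) (le_refl _), pe_zero a b (by omega) (by omega),
        if_pos rfl, mul_zero, add_zero, ← two_mul, pow_mul]
      norm_num
      omega
    · rw [pe_zero a b (by omega) (by omega), pe_zero a b (by omega) (by omega),
        if_neg (by omega)]
      ring

lemma mp_sum (a b : ℕ) (ha : 1 ≤ a) (hb : 1 ≤ b) (i j : ℕ) (hi : i < a+b+1)
    (hj : j < a+b+1) :
    ∑ m ∈ Finset.range (a+b+1), emm a i m * pe a b m j = el a b j i * dd a b j := by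
  rw [show (∑ m ∈ Finset.range (a+b+1), emm a i m * pe a b m j)
      = (if i = a then 1 else 2) * pe a b i j
        + (if i+1 < a+b+1 then 1 * pe a b (i+1) j else 0)
        + (if 1 ≤ i then 1 * pe a b (i-1) j else 0) from by
    simpa only [emm] using
      tri_sum (a+b+1) (if i = a then 1 else 2) 1 1 i (fun m => pe a b m j) hi]
  simp only [one_mul, el]
  rcases lt_trichotomy i j with hij | heq | hij
  · -- i < j
    rw [if_neg (show ¬ i = j by omega), if_neg (show ¬ i = j+1 by omega)]
    by_cases hja : j ≤ a
    · -- U1 : i < j ≤ a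
      have hcr : cr a b j = 0 := by unfold cr; rw [if_neg (by omega)]
      rw [hcr, if_neg (show ¬ i = a by omega), if_pos (show i+1 < a+b+1 by omega),
        pe_left a b (by omega) hja, pe_left a b (by omega) hja]
      simp only [zero_add, ite_self, zero_mul]
      rcases Nat.eq_zero_or_pos i with rfl | hi1
      · rw [if_neg (by omega), show 0+1+j = (0+j)+1 by ring, pow_succ]
        have d1 : ((j:ℚ)+1) ≠ 0 := by positivity
        push_cast
        field_simp
        ring
      · obtain ⟨i', rfl⟩ : ∃ i', i = i'+1 := ⟨i-1, by omega⟩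
        rw [if_pos (by omega)]
        simp only [Nat.add_sub_cancel]
        rw [pe_left a b (by omega) hja,
          show i'+1+j = (i'+j)+1 by ring, show i'+1+1+j = ((i'+j)+1)+1 by ring,
          pow_succ, pow_succ]
        have d1 : ((j:ℚ)+1) ≠ 0 := by positivity
        push_cast
        field_simp
        ring
    · -- a < j
      by_cases hij1 : i+1 = j
      · -- U6b
        have hcr : cr a b j = ((a+b+1-j:ℕ):ℚ)/(((a+b+1-j:ℕ):ℚ)+1) := by
          unfold cr; rw [if_pos (by omega)]
        have hdd : dd a b j = (((a+b+1-j:ℕ):ℚ)+1)/((a+b+1-j:ℕ):ℚ) := by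
          unfold dd; rw [if_neg (by omega), if_neg (by omega)]
        rw [if_pos hij1, hcr, hdd, if_pos (show i+1 < a+b+1 by omega),
          pe_zero a b (by omega) (by omega), mul_zero,
          pe_zero a b (i := i-1) (by omega) (by omega)]
        rw [hij1, pe_right a b (by omega) (le_refl _), ← two_mul, pow_mul]
        norm_num
        have d1 : ((a+b+1-j:ℕ):ℚ) ≠ 0 := Nat.cast_ne_zero.mpr (by omega)
        have d2 : ((a+b+1-j:ℕ):ℚ)+1 ≠ 0 := by positivity
        rw [div_self d1]
        field_simp
      · -- U6a
        rw [if_neg hij1, pe_zero a b (by omega) (by omega), mul_zero,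
          pe_zero a b (by omega) (by omega), pe_zero a b (i := i-1) (by omega) (by omega)]
        simp
  · -- i = j
    subst heq
    rw [if_pos rfl, if_neg (show ¬ i = i+1 by omega), if_neg (show ¬ i+1 = i by omega)]
    simp only [zero_add, add_zero, zero_mul]
    rcases lt_trichotomy i a with hia | hia | hia
    · -- U2 : i = j < a
      have hdd : dd a b i = ((i:ℚ)+2)/((i:ℚ)+1) := by unfold dd; rw [if_pos hia]
      rw [if_neg (show ¬ i = a by omega), hdd, if_pos (show i+1 < a+b+1 by omega),
        pe_left a b (le_refl _) (by omega), pe_zero a b (by omega) (by omega), ← two_mul,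
        pow_mul]
      norm_num
      rcases Nat.eq_zero_or_pos i with rfl | hi1
      · rw [if_neg (by omega)]
        norm_num
      · obtain ⟨i', rfl⟩ : ∃ i', i = i'+1 := ⟨i-1, by omega⟩
        rw [if_pos (by omega)]
        simp only [Nat.add_sub_cancel]
        rw [pe_left a b (by omega) (by omega), show i'+(i'+1) = 2*i'+1 by ring, pow_add,
          pow_mul]
        norm_num
        have d1 : ((i':ℚ)+1+1) ≠ 0 := by positivity
        push_cast
        field_simp
        ring
    · -- U3 : i = j = a
      have hdd : dd a b i = 1 - (a:ℚ)/((a:ℚ)+1) - (b:ℚ)/((b:ℚ)+1) := by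
        unfold dd; rw [if_neg (by omega), if_pos hia]
      rw [if_pos hia, hdd, one_mul, if_pos (show i+1 < a+b+1 by omega),
        if_pos (show 1 ≤ i by omega),
        pe_right a b (by omega) (le_refl _), pe_right a b (by omega) (by omega),
        pe_left a b (by omega) (by omega)]
      obtain ⟨i', rfl⟩ : ∃ i', i = i'+1 := ⟨i-1, by omega⟩
      simp only [Nat.add_sub_cancel]
      have e1 : a+b+1-(i'+1) = b+1 := by omega
      have e2 : a+b+1-(i'+1+1) = b := by omega
      have s1 : ∀ k : ℕ, (-1:ℚ)^(2*k) = 1 := fun k => by rw [pow_mul]; norm_num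
      have s2 : ∀ k : ℕ, (-1:ℚ)^(2*k+1) = -1 := fun k => by
        rw [pow_add, s1, one_mul, pow_one]
      rw [e1, e2, show (i'+1)+(i'+1) = 2*(i'+1) by ring,
        show i'+1+1+(i'+1) = 2*(i'+1)+1 by ring,
        show i'+(i'+1) = 2*i'+1 by ring, s1, s2, s2]
      have d1 : ((b+1:ℕ):ℚ) ≠ 0 := by positivity
      have d2 : ((i':ℚ)+1+1) ≠ 0 := by positivity
      have d3 : ((b:ℚ)+1) ≠ 0 := by positivity
      have d4 : ((a:ℚ)+1) ≠ 0 := by positivity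
      have hia' : (a:ℚ) = (i':ℚ)+1 := by exact_mod_cast congrArg (Nat.cast : ℕ → ℚ) hia.symm
      push_cast
      rw [hia']
      field_simp
      ring
    · -- U4 : i = j > a
      have hdd : dd a b i = (((a+b+1-i:ℕ):ℚ)+1)/((a+b+1-i:ℕ):ℚ) := by
        unfold dd; rw [if_neg (by omega), if_neg (by omega)]
      rw [if_neg (show ¬ i = a by omega), hdd, if_pos (show 1 ≤ i by omega),
        pe_right a b (by omega) (le_refl _),
        pe_zero a b (i := i-1) (by omega) (by omega), ← two_mul, pow_mul]
      norm_num
      have d1 : ((a+b+1-i:ℕ):ℚ) ≠ 0 := Nat.cast_ne_zero.mpr (by omega)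
      rw [div_self d1]
      by_cases hin : i < a+b
      · rw [if_pos hin, pe_right a b (by omega) (by omega),
          show i+1+i = 2*i+1 by ring, pow_add, pow_mul]
        norm_num
        have r1 : ((a+b+1-i:ℕ):ℚ) = ((a+b+1-(i+1):ℕ):ℚ) + 1 := by
          rw [show a+b+1-i = (a+b+1-(i+1))+1 by omega]; push_cast; ring
        rw [r1]
        have d2 : ((a+b+1-(i+1):ℕ):ℚ) + 1 ≠ 0 := by positivity
        field_simp
        ring
      · rw [if_neg hin]
        have e1 : a+b+1-i = 1 := by omega
        rw [e1] at d1 ⊢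
        norm_num
  · -- j < i
    rw [if_neg (show ¬ i = j by omega), if_neg (show ¬ i+1 = j by omega)]
    by_cases hja : a ≤ j
    · -- U5
      have hcl : cl a j = 0 := by unfold cl; rw [if_neg (by omega)]
      rw [hcl, if_neg (show ¬ i = a by omega), if_pos (show 1 ≤ i by omega),
        pe_right a b hja (by omega), pe_right a b (i := i-1) hja (by omega)]
      simp only [ite_self, zero_add, add_zero, zero_mul]
      obtain ⟨i', rfl⟩ : ∃ i', i = i'+1 := ⟨i-1, by omega⟩
      simp only [Nat.add_sub_cancel]
      have r1 : ((a+b+1-i':ℕ):ℚ) = ((a+b+1-(i'+1):ℕ):ℚ) + 1 := by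
        rw [show a+b+1-i' = (a+b+1-(i'+1))+1 by omega]; push_cast; ring
      have d1 : ((a+b+1-j:ℕ):ℚ) ≠ 0 := Nat.cast_ne_zero.mpr (by omega)
      by_cases hin : i'+1+1 < a+b+1
      · rw [if_pos hin, pe_right a b hja (by omega),
          show i'+1+1+j = ((i'+j)+1)+1 by ring, show i'+1+j = (i'+j)+1 by ring,
          pow_succ, pow_succ]
        have r2 : ((a+b+1-(i'+1):ℕ):ℚ) = ((a+b+1-(i'+1+1):ℕ):ℚ) + 1 := by
          rw [show a+b+1-(i'+1) = (a+b+1-(i'+1+1))+1 by omega]; push_cast; ring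
        rw [r1, r2]
        field_simp
        ring
      · rw [if_neg hin, show i'+1+j = (i'+j)+1 by ring, pow_succ, r1,
          show a+b+1-(i'+1) = 1 from by omega]
        push_cast
        field_simp
        ring
    · -- j < a, j < i
      by_cases hij1 : i = j+1
      · -- U7a
        have hcl : cl a j = ((j:ℚ)+1)/((j:ℚ)+2) := by unfold cl; rw [if_pos (by omega)]
        have hdd : dd a b j = ((j:ℚ)+2)/((j:ℚ)+1) := by unfold dd; rw [if_pos (by omega)]
        rw [if_pos hij1, hcl, hdd, hij1, if_pos (show j+1+1 < a+b+1 by omega),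
          if_pos (show 1 ≤ j+1 by omega)]
        simp only [Nat.add_sub_cancel]
        rw [pe_zero a b (by omega) (by omega), mul_zero,
          pe_zero a b (by omega) (by omega), pe_left a b (le_refl _) (by omega),
          show j+j = 2*j by ring, pow_mul]
        norm_num
        have d1 : ((j:ℚ)+1) ≠ 0 := by positivity
        have d2 : ((j:ℚ)+2) ≠ 0 := by positivity
        field_simp
      · -- U7b
        rw [if_neg hij1, pe_zero a b (by omega) (by omega), mul_zero,
          pe_zero a b (by omega) (by omega),
          pe_zero a b (i := i-1) (by omega) (by omega)]
        simp

end Aux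

def Pmat (a b : ℕ) : Matrix (Fin (a+b+1)) (Fin (a+b+1)) ℚ :=
  Matrix.of fun i j => pe a b (i:ℕ) (j:ℕ)

def Lmat (a b : ℕ) : Matrix (Fin (a+b+1)) (Fin (a+b+1)) ℚ :=
  Matrix.of fun i j => el a b (i:ℕ) (j:ℕ)

lemma triQ_eq (a b : ℕ) :
    triQ (a+b+1) (fun i => if (i:ℕ) = a then 1 else 2)
      = Matrix.of (fun i j : Fin (a+b+1) => emm a (i:ℕ) (j:ℕ)) := by
  ext i j
  simp only [triQ, Matrix.of_apply, emm]
  rcases eq_or_ne i j with rfl | hne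
  · rw [if_pos rfl, if_pos rfl, if_neg (show ¬((i:ℕ) = (i:ℕ)+1) by omega),
      if_neg (show ¬((i:ℕ)+1 = (i:ℕ)) by omega)]
    ring
  · rw [if_neg hne, if_neg (show ¬((j:ℕ) = (i:ℕ)) from fun h => hne (Fin.ext h.symm))]
    by_cases h1 : (i:ℕ)+1 = (j:ℕ) <;> by_cases h2 : (j:ℕ)+1 = (i:ℕ)
    · exfalso; omega
    · rw [if_pos (Or.inl h1), if_pos h1.symm, if_neg h2]; ring
    · rw [if_pos (Or.inr h2), if_neg (fun h => h1 h.symm), if_pos h2]; ring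
    · rw [if_neg (fun h => h.elim (fun hh => h1 hh) (fun hh => h2 hh)),
        if_neg (fun h => h1 h.symm), if_neg h2]
      ring

lemma LP_one (a b : ℕ) (ha : 1 ≤ a) (hb : 1 ≤ b) : Lmat a b * Pmat a b = 1 := by
  ext i j
  rw [Matrix.mul_apply, Matrix.one_apply]
  calc ∑ k : Fin (a+b+1), Lmat a b i k * Pmat a b k j
      = ∑ m ∈ Finset.range (a+b+1), el a b (i:ℕ) m * pe a b m (j:ℕ) :=
        Fin.sum_univ_eq_sum_range (fun m => el a b (i:ℕ) m * pe a b m (j:ℕ)) (a+b+1)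
    _ = if (i:ℕ) = (j:ℕ) then 1 else 0 := lp_sum a b ha hb (i:ℕ) (j:ℕ) i.isLt j.isLt
    _ = if i = j then 1 else 0 := by simp only [Fin.val_eq_val]

lemma MP_eq (a b : ℕ) (ha : 1 ≤ a) (hb : 1 ≤ b) :
    triQ (a+b+1) (fun i => if (i:ℕ) = a then 1 else 2) * Pmat a b
      = (Lmat a b)ᵀ * Matrix.diagonal (fun j : Fin (a+b+1) => dd a b (j:ℕ)) := by
  rw [triQ_eq]
  ext i j
  rw [Matrix.mul_apply, Matrix.mul_diagonal]
  calc ∑ k : Fin (a+b+1),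
        Matrix.of (fun i j : Fin (a+b+1) => emm a (i:ℕ) (j:ℕ)) i k * Pmat a b k j
      = ∑ m ∈ Finset.range (a+b+1), emm a (i:ℕ) m * pe a b m (j:ℕ) :=
        Fin.sum_univ_eq_sum_range (fun m => emm a (i:ℕ) m * pe a b m (j:ℕ)) (a+b+1)
    _ = el a b (j:ℕ) (i:ℕ) * dd a b (j:ℕ) := mp_sum a b ha hb (i:ℕ) (j:ℕ) i.isLt j.isLt
    _ = (Lmat a b)ᵀ i j * dd a b (j:ℕ) := rfl

lemma diag_congr (a b : ℕ) (ha : 1 ≤ a) (hb : 1 ≤ b) :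
    Matrix.diagonal (fun j : Fin (a+b+1) => dd a b (j:ℕ))
      = (Pmat a b)ᵀ * triQ (a+b+1) (fun i => if (i:ℕ) = a then 1 else 2) * Pmat a b := by
  have hLP := LP_one a b ha hb
  calc Matrix.diagonal (fun j : Fin (a+b+1) => dd a b (j:ℕ))
      = 1ᵀ * Matrix.diagonal (fun j : Fin (a+b+1) => dd a b (j:ℕ)) := by
        rw [Matrix.transpose_one, Matrix.one_mul]
    _ = (Lmat a b * Pmat a b)ᵀ * Matrix.diagonal (fun j : Fin (a+b+1) => dd a b (j:ℕ)) := by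
        rw [hLP]
    _ = (Pmat a b)ᵀ * ((Lmat a b)ᵀ * Matrix.diagonal (fun j : Fin (a+b+1) => dd a b (j:ℕ))) := by
        rw [Matrix.transpose_mul, Matrix.mul_assoc]
    _ = (Pmat a b)ᵀ * (triQ (a+b+1) (fun i => if (i:ℕ) = a then 1 else 2) * Pmat a b) := by
        rw [MP_eq a b ha hb]
    _ = _ := by rw [Matrix.mul_assoc]

lemma Pmat_det (a b : ℕ) (ha : 1 ≤ a) (hb : 1 ≤ b) : IsUnit (Pmat a b).det :=
  Matrix.isUnit_det_of_left_inverse (LP_one a b ha hb)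

lemma xneg (a b : ℕ) (ha : 1 ≤ a) (hb : 1 ≤ b) (hab : 3 ≤ a + b) :
    1 - (a : ℚ) / (a + 1) - (b : ℚ) / (b + 1) < 0 := by
  have hab2 : 2 ≤ a*b := by
    rcases Nat.lt_or_ge a 2 with h|h
    · have haa : a = 1 := by omega
      subst haa
      have h2b : 2 ≤ b := by omega
      calc 2 ≤ b := h2b
        _ = 1*b := (one_mul b).symm
    · calc 2 = 2*1 := by norm_num
        _ ≤ a*b := Nat.mul_le_mul h hb
  have h2 : (2:ℚ) ≤ (a:ℚ)*(b:ℚ) := by exact_mod_cast hab2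
  have hA : (0:ℚ) < (a:ℚ)+1 := by positivity
  have hB : (0:ℚ) < (b:ℚ)+1 := by positivity
  have key : 1 - (a:ℚ)/(a+1) - (b:ℚ)/(b+1) = (1 - (a:ℚ)*(b:ℚ))/(((a:ℚ)+1)*((b:ℚ)+1)) := by
    field_simp
    ring
  rw [key]
  apply div_neg_of_neg_of_pos
  · linarith
  · positivity

lemma dd_pos_iff (a b : ℕ) (ha : 1 ≤ a) (hb : 1 ≤ b) (hab : 3 ≤ a + b)
    (j : ℕ) (hj : j < a+b+1) :
    (0 < dd a b j ↔ j ≠ a) ∧ (dd a b j < 0 ↔ j = a) := by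
  unfold dd
  rcases lt_trichotomy j a with h | h | h
  · rw [if_pos h]
    have : (0:ℚ) < ((j:ℚ)+2)/((j:ℚ)+1) := by positivity
    constructor
    · exact ⟨fun _ => by omega, fun _ => this⟩
    · exact ⟨fun hc => absurd (lt_trans hc this) (lt_irrefl _), fun hc => by omega⟩
  · rw [if_neg (by omega), if_pos h]
    have hx := xneg a b ha hb hab
    constructor
    · exact ⟨fun hc => absurd (lt_trans hx hc) (lt_irrefl _), fun hc => by omega⟩
    · exact ⟨fun _ => h, fun _ => hx⟩
  · rw [if_neg (by omega), if_neg (by omega)]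
    have h0 : (0:ℚ) < ((a+b+1-j:ℕ):ℚ) := by
      have : 0 < a+b+1-j := by omega
      exact_mod_cast this
    have : (0:ℚ) < (((a+b+1-j:ℕ):ℚ)+1)/((a+b+1-j:ℕ):ℚ) := by positivity
    constructor
    · exact ⟨fun _ => by omega, fun _ => this⟩
    · exact ⟨fun hc => absurd (lt_trans hc this) (lt_irrefl _), fun hc => by omega⟩

lemma sig_part (a b : ℕ) (ha : 1 ≤ a) (hb : 1 ≤ b) (hab : 3 ≤ a + b) :
    sigQ (triQ (a + b + 1) (fun i => if (i : ℕ) = a then 1 else 2)) = a + b - 1 := by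
  have hMsymm : ∀ i j, triQ (a+b+1) (fun i => if (i:ℕ) = a then 1 else 2) i j
      = triQ (a+b+1) (fun i => if (i:ℕ) = a then 1 else 2) j i := by
    intro i j
    simp only [triQ, Matrix.of_apply]
    rcases eq_or_ne i j with rfl | hne
    · rfl
    · rw [if_neg hne, if_neg (Ne.symm hne)]
      exact if_congr or_comm rfl rfl
  have hherm : ((triQ (a+b+1) (fun i => if (i:ℕ) = a then 1 else 2)).map
      (fun x : ℚ => (x:ℝ))).IsHermitian := by
    show _ᴴ = _
    ext i j
    simp only [Matrix.conjTranspose_apply, Matrix.map_apply, star_trivial]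
    exact congrArg _ (hMsymm j i)
  have hcongrR : Matrix.diagonal (fun i : Fin (a+b+1) => ((dd a b (i:ℕ) : ℚ) : ℝ))
      = ((Pmat a b).map (Rat.castHom ℝ))ᵀ
        * ((triQ (a+b+1) (fun i => if (i:ℕ) = a then 1 else 2)).map (Rat.castHom ℝ))
        * ((Pmat a b).map (Rat.castHom ℝ)) := by
    rw [show ((Pmat a b).map (Rat.castHom ℝ))ᵀ = ((Pmat a b)ᵀ).map (Rat.castHom ℝ) from
      (Matrix.transpose_map).symm]
    rw [← Matrix.map_mul, ← Matrix.map_mul, ← diag_congr a b ha hb,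
      Matrix.diagonal_map (map_zero _)]
    rfl
  have hPr : IsUnit ((Pmat a b).map (Rat.castHom ℝ)).det := by
    have hd : ((Pmat a b).map (Rat.castHom ℝ)).det = (Rat.castHom ℝ) (Pmat a b).det :=
      (RingHom.map_det (Rat.castHom ℝ) (Pmat a b)).symm
    rw [hd]
    exact (Pmat_det a b ha hb).map _
  obtain ⟨hpos, hneg⟩ := eig_count _ hherm
      (fun i : Fin (a+b+1) => ((dd a b (i:ℕ) : ℚ) : ℝ))
      ((Pmat a b).map (Rat.castHom ℝ)) hPr hcongrR
  set c : Fin (a+b+1) := ⟨a, by omega⟩ with hc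
  have hfpos : (Finset.univ.filter fun i : Fin (a+b+1) => (0:ℝ) < ((dd a b (i:ℕ):ℚ):ℝ))
      = Finset.univ.erase c := by
    ext i
    simp only [Finset.mem_filter, Finset.mem_univ, true_and, Finset.mem_erase, and_true]
    rw [Rat.cast_pos, (dd_pos_iff a b ha hb hab (i:ℕ) i.isLt).1]
    simp [hc, Fin.ext_iff]
  have hfneg : (Finset.univ.filter fun i : Fin (a+b+1) => ((dd a b (i:ℕ):ℚ):ℝ) < 0)
      = {c} := by
    ext i
    simp only [Finset.mem_filter, Finset.mem_univ, true_and, Finset.mem_singleton]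
    rw [show (((dd a b (i:ℕ):ℚ):ℝ) < 0) ↔ dd a b (i:ℕ) < 0 from Rat.cast_lt_zero,
      (dd_pos_iff a b ha hb hab (i:ℕ) i.isLt).2]
    simp [hc, Fin.ext_iff]
  unfold sigQ
  rw [dif_pos hherm, hpos, hneg, hfpos, hfneg,
    Finset.card_erase_of_mem (Finset.mem_univ c), Finset.card_singleton,
    Finset.card_univ, Fintype.card_fin]
  push_cast
  omega

theorem tri_a1b_congruent (a b : ℕ) (ha : 1 ≤ a) (hb : 1 ≤ b) (hab : 3 ≤ a + b) :
    (1 - (a : ℚ) / (a + 1) - (b : ℚ) / (b + 1) < 0) ∧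
    (∃ P : Matrix (Fin (a + b + 1)) (Fin (a + b + 1)) ℚ, IsUnit P.det ∧
      Matrix.diagonal (fun i : Fin (a + b + 1) =>
          if (i : ℕ) < a then ((i : ℕ) + 2 : ℚ) / ((i : ℕ) + 1)
          else if (i : ℕ) = a then 1 - (a : ℚ) / (a + 1) - (b : ℚ) / (b + 1)
          else ((a + b + 1 - (i : ℕ) : ℕ) + 1 : ℚ) / ((a + b + 1 - (i : ℕ) : ℕ)))
        = Pᵀ * triQ (a + b + 1) (fun i => if (i : ℕ) = a then 1 else 2) * P) ∧
    sigQ (triQ (a + b + 1) (fun i => if (i : ℕ) = a then 1 else 2)) = a + b - 1 := by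
  refine ⟨xneg a b ha hb hab, ⟨Pmat a b, Pmat_det a b ha hb, ?_⟩, sig_part a b ha hb hab⟩
  have hfun : (fun i : Fin (a + b + 1) =>
      if (i : ℕ) < a then ((i : ℕ) + 2 : ℚ) / ((i : ℕ) + 1)
      else if (i : ℕ) = a then 1 - (a : ℚ) / (a + 1) - (b : ℚ) / (b + 1)
      else ((a + b + 1 - (i : ℕ) : ℕ) + 1 : ℚ) / ((a + b + 1 - (i : ℕ) : ℕ)))
      = fun j : Fin (a+b+1) => dd a b (j:ℕ) := by
    funext i
    simp only [dd]
  rw [hfun]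
  exact diag_congr a b ha hb
end

section
/- Let M = T(d_1,...,d_n) be a tridiagonal integer matrix with 1s on the secondary diagonals and d_1 = -1. Then σ(M) = -1 + σ(M'), where M' = T(d_2 + 1, d_3, ..., d_n). -/
open Matrix Finset

namespace SigAux

open Module

variable {k : ℕ}

/-- The quadratic form of a matrix. -/
def qf (M : Matrix (Fin k) (Fin k) ℝ) (x : Fin k → ℝ) : ℝ := x ⬝ᵥ (M *ᵥ x)

@[simp] lemma qf_zero (M : Matrix (Fin k) (Fin k) ℝ) : qf M 0 = 0 := by
  simp [qf]

lemma exists_equiv {M : Matrix (Fin k) (Fin k) ℝ} (hM : M.IsHermitian) :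
    ∃ e : (Fin k → ℝ) ≃ₗ[ℝ] (Fin k → ℝ),
      ∀ x, qf M x = ∑ i, hM.eigenvalues i * (e x i) ^ 2 := by
  set U : Matrix (Fin k) (Fin k) ℝ := (hM.eigenvectorUnitary : Matrix (Fin k) (Fin k) ℝ) with hU
  have h1 : star U * U = 1 := Unitary.coe_star_mul_self hM.eigenvectorUnitary
  have h2 : U * star U = 1 := Unitary.coe_mul_star_self hM.eigenvectorUnitary
  refine ⟨LinearEquiv.ofLinear (star U).mulVecLin U.mulVecLin ?_ ?_, ?_⟩
  · rw [← Matrix.mulVecLin_mul, h1, Matrix.mulVecLin_one]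
  · rw [← Matrix.mulVecLin_mul, h2, Matrix.mulVecLin_one]
  · intro x
    simp only [LinearEquiv.ofLinear_apply, Matrix.mulVecLin_apply]
    conv_lhs => rw [qf, hM.spectral_theorem, Unitary.conjStarAlgAut_apply]
    rw [← Matrix.mulVec_mulVec, ← Matrix.mulVec_mulVec, Matrix.dotProduct_mulVec]
    have hst : x ᵥ* U = (star U) *ᵥ x := by
      rw [Matrix.star_eq_conjTranspose, Matrix.conjTranspose_eq_transpose_of_trivial,
        Matrix.mulVec_transpose]
    rw [hst, dotProduct, Fintype.sum_congr]
    intro i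
    rw [Matrix.mulVec_diagonal]
    simp [RCLike.ofReal_real_eq_id]
    ring

lemma ker_bound (p : Fin k → Prop) [DecidablePred p]
    (f : (Fin k → ℝ) →ₗ[ℝ] (Fin k → ℝ)) :
    ∃ V : Submodule ℝ (Fin k → ℝ),
      (∀ x ∈ V, ∀ i, p i → f x i = 0) ∧
      k ≤ finrank ℝ V + (univ.filter p).card := by
  classical
  let π : (Fin k → ℝ) →ₗ[ℝ] ({i // p i} → ℝ) :=
    (LinearMap.pi fun i : {i // p i} => LinearMap.proj i.1) ∘ₗ f
  refine ⟨LinearMap.ker π, ?_, ?_⟩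
  · intro x hx i hi
    have := congrFun (LinearMap.mem_ker.mp hx) ⟨i, hi⟩
    simpa [π] using this
  · have h1 := LinearMap.finrank_range_add_finrank_ker π
    have h2 : finrank ℝ (LinearMap.range π) ≤ (univ.filter p).card := by
      have h3 := Submodule.finrank_le (LinearMap.range π)
      rwa [finrank_pi ℝ, Fintype.card_subtype] at h3
    rw [finrank_pi ℝ, Fintype.card_fin] at h1
    omega

lemma disj_bound (W V : Submodule ℝ (Fin k → ℝ))
    (h : ∀ x ∈ W, x ∈ V → x = 0) :
    finrank ℝ W + finrank ℝ V ≤ k := by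
  have hinf : W ⊓ V = ⊥ := by
    rw [Submodule.eq_bot_iff]
    exact fun x hx => h x hx.1 hx.2
  have := Submodule.finrank_sup_add_finrank_inf_eq W V
  rw [hinf, finrank_bot] at this
  have h2 : finrank ℝ ↥(W ⊔ V) ≤ k := by
    have := Submodule.finrank_le (W ⊔ V)
    rwa [finrank_pi ℝ, Fintype.card_fin] at this
  omega

section counts
variable {M : Matrix (Fin k) (Fin k) ℝ} (hM : M.IsHermitian)

lemma le_card_pos (W : Submodule ℝ (Fin k → ℝ))
    (hW : ∀ x ∈ W, x ≠ 0 → 0 < qf M x) :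
    finrank ℝ W ≤ (univ.filter fun i => 0 < hM.eigenvalues i).card := by
  classical
  obtain ⟨e, he⟩ := exists_equiv hM
  obtain ⟨V, hV0, hVr⟩ := ker_bound (fun i => 0 < hM.eigenvalues i) e.toLinearMap
  simp only [LinearEquiv.coe_coe] at hV0
  have hd := disj_bound W V ?_
  · omega
  · intro x hxW hxV
    by_contra hx
    have h1 : 0 < qf M x := hW x hxW hx
    have h2 : qf M x ≤ 0 := by
      rw [he]
      apply Finset.sum_nonpos
      intro i _
      by_cases hp : 0 < hM.eigenvalues i
      · rw [hV0 x hxV i hp]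
        simp
      · push_neg at hp
        exact mul_nonpos_of_nonpos_of_nonneg hp (sq_nonneg _)
    linarith

lemma card_pos_le :
    ∃ W : Submodule ℝ (Fin k → ℝ),
      (∀ x ∈ W, x ≠ 0 → 0 < qf M x) ∧
      (univ.filter fun i => 0 < hM.eigenvalues i).card ≤ finrank ℝ W := by
  classical
  obtain ⟨e, he⟩ := exists_equiv hM
  obtain ⟨V, hV0, hVr⟩ := ker_bound (fun i => ¬ 0 < hM.eigenvalues i) e.toLinearMap
  simp only [LinearEquiv.coe_coe] at hV0
  refine ⟨V, ?_, ?_⟩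
  · intro x hxV hx
    rw [he]
    apply Finset.sum_pos'
    · intro i _
      by_cases hp : 0 < hM.eigenvalues i
      · positivity
      · rw [hV0 x hxV i hp]; simp
    · have hex : e x ≠ 0 := fun h => hx (by simpa using congrArg e.symm h)
      obtain ⟨i, hi⟩ := Function.ne_iff.mp hex
      simp only [Pi.zero_apply] at hi
      refine ⟨i, Finset.mem_univ i, ?_⟩
      have hp : 0 < hM.eigenvalues i := by
        by_contra hp
        exact hi (hV0 x hxV i hp)
      have h2 : 0 < (e x i) ^ 2 := sq_pos_of_ne_zero hi
      exact mul_pos hp h2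
  · have hcc := Finset.card_filter_add_card_filter_not
      (s := (univ : Finset (Fin k))) (p := fun i => 0 < hM.eigenvalues i)
    rw [Finset.card_univ, Fintype.card_fin] at hcc
    omega

lemma le_card_nonneg (W : Submodule ℝ (Fin k → ℝ))
    (hW : ∀ x ∈ W, x ≠ 0 → 0 ≤ qf M x) :
    finrank ℝ W ≤ (univ.filter fun i => 0 ≤ hM.eigenvalues i).card := by
  classical
  obtain ⟨e, he⟩ := exists_equiv hM
  obtain ⟨V, hV0, hVr⟩ := ker_bound (fun i => 0 ≤ hM.eigenvalues i) e.toLinearMap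
  simp only [LinearEquiv.coe_coe] at hV0
  have hd := disj_bound W V ?_
  · omega
  · intro x hxW hxV
    by_contra hx
    have h1 : 0 ≤ qf M x := hW x hxW hx
    have h2 : qf M x < 0 := by
      rw [he]
      have hex : e x ≠ 0 := fun h => hx (by simpa using congrArg e.symm h)
      obtain ⟨i, hi⟩ := Function.ne_iff.mp hex
      simp only [Pi.zero_apply] at hi
      have hneg : ∑ i, -(hM.eigenvalues i * (e x i) ^ 2) > 0 := by
        apply Finset.sum_pos'
        · intro j _
          by_cases hp : 0 ≤ hM.eigenvalues j
          · rw [hV0 x hxV j hp]; simp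
          · push_neg at hp
            nlinarith [sq_nonneg (e x j)]
        · refine ⟨i, Finset.mem_univ i, ?_⟩
          have hp : ¬ 0 ≤ hM.eigenvalues i := fun hp => hi (hV0 x hxV i hp)
          push_neg at hp
          have h2 : 0 < (e x i) ^ 2 := sq_pos_of_ne_zero hi
          nlinarith
      rw [Finset.sum_neg_distrib] at hneg
      linarith
    linarith

lemma card_nonneg_le :
    ∃ W : Submodule ℝ (Fin k → ℝ),
      (∀ x ∈ W, 0 ≤ qf M x) ∧
      (univ.filter fun i => 0 ≤ hM.eigenvalues i).card ≤ finrank ℝ W := by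
  classical
  obtain ⟨e, he⟩ := exists_equiv hM
  obtain ⟨V, hV0, hVr⟩ := ker_bound (fun i => ¬ 0 ≤ hM.eigenvalues i) e.toLinearMap
  simp only [LinearEquiv.coe_coe] at hV0
  refine ⟨V, ?_, ?_⟩
  · intro x hxV
    rw [he]
    apply Finset.sum_nonneg
    intro i _
    by_cases hp : 0 ≤ hM.eigenvalues i
    · positivity
    · rw [hV0 x hxV i hp]; simp
  · have hcc := Finset.card_filter_add_card_filter_not
      (s := (univ : Finset (Fin k))) (p := fun i => 0 ≤ hM.eigenvalues i)
    rw [Finset.card_univ, Fintype.card_fin] at hcc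
    omega

end counts

section compare
variable {n m : ℕ} {M : Matrix (Fin n) (Fin n) ℝ} {N : Matrix (Fin m) (Fin m) ℝ}

lemma posCard_le (hM : M.IsHermitian) (hN : N.IsHermitian)
    (φ : (Fin n → ℝ) →ₗ[ℝ] (Fin m → ℝ))
    (h : ∀ x, x ≠ 0 → 0 < qf M x → 0 < qf N (φ x)) :
    (univ.filter fun i => 0 < hM.eigenvalues i).card ≤
      (univ.filter fun j => 0 < hN.eigenvalues j).card := by
  obtain ⟨W, hWpos, hWr⟩ := card_pos_le hM
  set f := φ.comp W.subtype with hf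
  have hker : Function.Injective f := by
    rw [← LinearMap.ker_eq_bot, LinearMap.ker_eq_bot']
    intro z hz
    by_contra hz0
    have hzne : (z : Fin n → ℝ) ≠ 0 := by
      simpa [Submodule.coe_eq_zero] using hz0
    have hpos := h z hzne (hWpos z z.2 hzne)
    rw [show φ (z : Fin n → ℝ) = 0 from hz] at hpos
    simp at hpos
  have hr1 : finrank ℝ (LinearMap.range f) = finrank ℝ W :=
    LinearMap.finrank_range_of_inj hker
  have hr2 : LinearMap.range f = W.map φ := by
    rw [hf, LinearMap.range_comp, Submodule.range_subtype]
  have hle := le_card_pos hN (W.map φ) ?_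
  · rw [← hr2, hr1] at hle
    omega
  · rintro y ⟨x, hxW, rfl⟩ hy
    have hx : x ≠ 0 := by rintro rfl; simp at hy
    exact h x hx (hWpos x hxW hx)

lemma nonnegCard_le (hM : M.IsHermitian) (hN : N.IsHermitian)
    (φ : (Fin n → ℝ) →ₗ[ℝ] (Fin m → ℝ))
    (h : ∀ x, x ≠ 0 → 0 ≤ qf M x → φ x ≠ 0 ∧ 0 ≤ qf N (φ x)) :
    (univ.filter fun i => 0 ≤ hM.eigenvalues i).card ≤
      (univ.filter fun j => 0 ≤ hN.eigenvalues j).card := by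
  obtain ⟨W, hWpos, hWr⟩ := card_nonneg_le hM
  set f := φ.comp W.subtype with hf
  have hker : Function.Injective f := by
    rw [← LinearMap.ker_eq_bot, LinearMap.ker_eq_bot']
    intro z hz
    by_contra hz0
    have hzne : (z : Fin n → ℝ) ≠ 0 := by
      simpa [Submodule.coe_eq_zero] using hz0
    exact (h z hzne (hWpos z z.2)).1 hz
  have hr1 : finrank ℝ (LinearMap.range f) = finrank ℝ W :=
    LinearMap.finrank_range_of_inj hker
  have hr2 : LinearMap.range f = W.map φ := by
    rw [hf, LinearMap.range_comp, Submodule.range_subtype]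
  have hle := le_card_nonneg hN (W.map φ) ?_
  · rw [← hr2, hr1] at hle
    omega
  · rintro y ⟨x, hxW, rfl⟩ hy
    have hx : x ≠ 0 := by rintro rfl; simp at hy
    exact (h x hx (hWpos x hxW)).2

end compare

lemma negCard_add {M : Matrix (Fin k) (Fin k) ℝ} (hM : M.IsHermitian) :
    (univ.filter fun i => hM.eigenvalues i < 0).card
      + (univ.filter fun i => 0 ≤ hM.eigenvalues i).card = k := by
  have h := Finset.card_filter_add_card_filter_not
    (s := (univ : Finset (Fin k))) (p := fun i => hM.eigenvalues i < 0)
  simp only [not_lt] at h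
  rwa [Finset.card_univ, Fintype.card_fin] at h

lemma tri_herm (k : ℕ) (d : Fin k → ℤ) : (tri k d).IsHermitian := by
  ext i j
  simp only [tri, Matrix.conjTranspose_apply, Matrix.of_apply, star_trivial]
  by_cases h : i = j
  · subst h; simp
  · simp only [h, Ne.symm h, if_false]
    rw [if_congr (Iff.intro Or.symm Or.symm) rfl rfl]

lemma tri_succ_succ (m : ℕ) (d : Fin (m + 2) → ℤ) (i j : Fin (m + 1)) :
    tri (m + 2) d i.succ j.succ = tri (m + 1) (fun i => d i.succ) i j := by
  simp only [tri, Matrix.of_apply, Fin.succ_inj, Fin.val_succ]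
  by_cases h : i = j
  · simp [h]
  · simp only [h, if_false]
    have hc : ((i:ℕ) + 1 + 1 = (j:ℕ) + 1 ∨ (j:ℕ) + 1 + 1 = (i:ℕ) + 1) ↔
        ((i:ℕ) + 1 = (j:ℕ) ∨ (j:ℕ) + 1 = (i:ℕ)) := by omega
    rw [if_congr hc rfl rfl]

lemma tri_row_zero (m : ℕ) (d : Fin (m + 2) → ℤ) (j : Fin (m + 1)) :
    tri (m + 2) d 0 j.succ = if j = 0 then 1 else 0 := by
  simp only [tri, Matrix.of_apply, Fin.val_succ]
  have h0 : ¬ (0 : Fin (m + 2)) = j.succ := (Fin.succ_ne_zero j).symm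
  simp only [h0, if_false, Fin.val_zero]
  refine (if_congr (by omega : ((0:ℕ) + 1 = (j:ℕ) + 1 ∨ (j:ℕ) + 1 + 1 = 0) ↔ (j:ℕ) = 0) rfl rfl).trans ?_
  rw [if_congr (show (j:ℕ) = 0 ↔ j = 0 by rw [Fin.ext_iff]; simp) rfl rfl]

lemma tri_col_zero (m : ℕ) (d : Fin (m + 2) → ℤ) (i : Fin (m + 1)) :
    tri (m + 2) d i.succ 0 = if i = 0 then 1 else 0 := by
  simp only [tri, Matrix.of_apply, Fin.val_succ]
  have h0 : ¬ i.succ = (0 : Fin (m + 2)) := Fin.succ_ne_zero i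
  simp only [h0, if_false, Fin.val_zero]
  refine (if_congr (by omega : ((i:ℕ) + 1 + 1 = 0 ∨ (0:ℕ) + 1 = (i:ℕ) + 1) ↔ (i:ℕ) = 0) rfl rfl).trans ?_
  rw [if_congr (show (i:ℕ) = 0 ↔ i = 0 by rw [Fin.ext_iff]; simp) rfl rfl]

lemma tri_zero_zero (m : ℕ) (d : Fin (m + 2) → ℤ) : tri (m + 2) d 0 0 = (d 0 : ℝ) := by
  simp [tri]

lemma qf_tri_succ (m : ℕ) (d : Fin (m + 2) → ℤ) (x : Fin (m + 2) → ℝ) :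
    qf (tri (m + 2) d) x = (d 0 : ℝ) * x 0 ^ 2 + 2 * x 0 * x (Fin.succ 0)
      + qf (tri (m + 1) (fun i => d i.succ)) (fun i => x i.succ) := by
  simp only [qf, dotProduct, Matrix.mulVec, dotProduct]
  rw [Fin.sum_univ_succ]
  have hrow0 : ∑ j, tri (m + 2) d 0 j * x j = (d 0 : ℝ) * x 0 + x (Fin.succ 0) := by
    rw [Fin.sum_univ_succ, tri_zero_zero]
    congr 1
    rw [Finset.sum_congr rfl (fun j _ => by rw [tri_row_zero])]
    simp [Finset.sum_ite_eq']
  have hrows : ∀ i : Fin (m + 1), ∑ j, tri (m + 2) d i.succ j * x j =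
      (if i = 0 then x 0 else 0) +
        ∑ j, tri (m + 1) (fun i => d i.succ) i j * x j.succ := by
    intro i
    rw [Fin.sum_univ_succ, tri_col_zero]
    congr 1
    · split <;> simp
    · exact Finset.sum_congr rfl fun j _ => by rw [tri_succ_succ]
  rw [hrow0, Finset.sum_congr rfl fun i _ => by rw [hrows i]]
  simp only [mul_add, Finset.sum_add_distrib, mul_ite, mul_zero,
    Finset.sum_ite_eq', Finset.mem_univ, if_true]
  ring

lemma qf_shift (m : ℕ) (e : Fin (m + 1) → ℤ) (y : Fin (m + 1) → ℝ) :
    qf (tri (m + 1) (fun i => e i + if (i : ℕ) = 0 then 1 else 0)) y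
      = qf (tri (m + 1) e) y + y 0 ^ 2 := by
  have hmat : tri (m + 1) (fun i => e i + if (i : ℕ) = 0 then 1 else 0)
      = tri (m + 1) e + Matrix.diagonal (fun i : Fin (m + 1) => if (i : ℕ) = 0 then (1 : ℝ) else 0) := by
    ext i j
    by_cases h : i = j
    · subst h
      simp only [tri, Matrix.of_apply, if_pos rfl, Matrix.add_apply,
        Matrix.diagonal_apply_eq]
      push_cast [apply_ite]
      split <;> ring
    · simp [tri, h, Matrix.diagonal_apply_ne _ h]
  rw [hmat, qf, Matrix.add_mulVec, dotProduct_add]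
  congr 1
  have hterm : ∀ i : Fin (m + 1),
      y i * (Matrix.diagonal (fun i : Fin (m + 1) => if (i : ℕ) = 0 then (1 : ℝ) else 0) *ᵥ y) i
        = if i = 0 then y i * y i else 0 := by
    intro i
    rw [Matrix.mulVec_diagonal]
    by_cases h : i = 0
    · subst h; simp
    · have h' : ¬ (i : ℕ) = 0 := by
        rw [Fin.ext_iff] at h; simpa using h
      simp [h, h']
  rw [dotProduct, Finset.sum_congr rfl fun i _ => hterm i]
  simp [Finset.sum_ite_eq']
  ring

lemma qf_key (m : ℕ) (d : Fin (m + 2) → ℤ) (hd : d 0 = -1) (x : Fin (m + 2) → ℝ) :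
    qf (tri (m + 2) d) x
      = qf (tri (m + 1) (fun i => d i.succ + if (i : ℕ) = 0 then 1 else 0)) (fun i => x i.succ)
        - (x 0 - x (Fin.succ 0)) ^ 2 := by
  rw [qf_tri_succ, qf_shift, hd]
  push_cast
  ring

def tailMap (m : ℕ) : (Fin (m + 1) → ℝ) →ₗ[ℝ] (Fin m → ℝ) where
  toFun x := fun i => x i.succ
  map_add' _ _ := rfl
  map_smul' _ _ := rfl

def consMap (m : ℕ) : (Fin (m + 1) → ℝ) →ₗ[ℝ] (Fin (m + 2) → ℝ) where
  toFun y := Fin.cons (y 0) y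
  map_add' y z := by
    funext i
    refine Fin.cases ?_ ?_ i <;> simp
  map_smul' c y := by
    funext i
    refine Fin.cases ?_ ?_ i <;> simp

@[simp] lemma tailMap_apply (m : ℕ) (x : Fin (m + 1) → ℝ) (i : Fin m) :
    tailMap m x i = x i.succ := rfl

@[simp] lemma consMap_zero_apply (m : ℕ) (y : Fin (m + 1) → ℝ) :
    consMap m y 0 = y 0 := rfl

@[simp] lemma consMap_succ_apply (m : ℕ) (y : Fin (m + 1) → ℝ) (i : Fin (m + 1)) :
    consMap m y i.succ = y i := by
  simp [consMap]

end SigAux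

theorem sig_tri_first_neg_one (n : ℕ) (d : Fin (n + 1) → ℤ) (hd : d 0 = -1) :
    sig (tri (n + 1) d) =
      -1 + sig (tri n (fun i => d i.succ + if (i : ℕ) = 0 then 1 else 0)) := by
  match n with
  | 0 =>
    have hM := SigAux.tri_herm 1 d
    have hN := SigAux.tri_herm 0 (fun i => d i.succ + if (i : ℕ) = 0 then 1 else 0)
    have heig : hM.eigenvalues 0 = -1 := by
      have hdet := hM.det_eq_prod_eigenvalues
      rw [Matrix.det_fin_one, Fin.prod_univ_one] at hdet
      have h00 : tri 1 d 0 0 = (d 0 : ℝ) := by simp [tri]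
      rw [h00, hd] at hdet
      simpa [RCLike.ofReal_real_eq_id] using hdet.symm
    have hpos : (univ.filter fun i => 0 < hM.eigenvalues i) = ∅ := by
      rw [Finset.filter_eq_empty_iff]
      intro i _
      rw [Subsingleton.elim i 0, heig]
      norm_num
    have hneg : (univ.filter fun i => hM.eigenvalues i < 0) = univ := by
      rw [Finset.filter_eq_self]
      intro i _
      rw [Subsingleton.elim i 0, heig]
      norm_num
    simp only [sig]
    rw [dif_pos hM, dif_pos hN, hpos, hneg]
    simp
  | m + 1 =>
    have hM := SigAux.tri_herm (m + 2) d
    have hN := SigAux.tri_herm (m + 1) (fun i => d i.succ + if (i : ℕ) = 0 then 1 else 0)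
    set N := tri (m + 1) (fun i => d i.succ + if (i : ℕ) = 0 then 1 else 0) with hNdef
    have htail : ∀ x : Fin (m + 2) → ℝ,
        SigAux.tailMap (m + 1) x = fun i => x i.succ := fun _ => rfl
    have hkey : ∀ x : Fin (m + 2) → ℝ,
        SigAux.qf (tri (m + 2) d) x
          = SigAux.qf N (SigAux.tailMap (m + 1) x) - (x 0 - x (Fin.succ 0)) ^ 2 := by
      intro x
      rw [htail x, hNdef]
      exact SigAux.qf_key m d hd x
    have hconskey : ∀ y : Fin (m + 1) → ℝ,
        SigAux.qf (tri (m + 2) d) (SigAux.consMap m y) = SigAux.qf N y := by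
      intro y
      rw [hkey (SigAux.consMap m y)]
      have ht : SigAux.tailMap (m + 1) (SigAux.consMap m y) = y := by
        funext i
        simp
      have h1 : SigAux.consMap m y (Fin.succ 0) = y 0 := SigAux.consMap_succ_apply m y 0
      have h2 : SigAux.consMap m y 0 = y 0 := rfl
      rw [ht, h1, h2]
      ring
    have hpos1 := SigAux.posCard_le hM hN (SigAux.tailMap (m + 1)) (by
      intro x hx hqx
      have hk := hkey x
      nlinarith [sq_nonneg (x 0 - x (Fin.succ 0))])
    have hpos2 := SigAux.posCard_le hN hM (SigAux.consMap m) (by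
      intro y hy hqy
      rw [hconskey y]
      exact hqy)
    have hnn1 := SigAux.nonnegCard_le hM hN (SigAux.tailMap (m + 1)) (by
      intro x hx hqx
      have hk := hkey x
      constructor
      · intro h0
        apply hx
        have hx1 : x (Fin.succ 0) = 0 := by
          have h1 := congrFun h0 0
          rwa [SigAux.tailMap_apply, Pi.zero_apply] at h1
        rw [h0] at hk
        simp only [SigAux.qf_zero, zero_sub, hx1, sub_zero] at hk
        have hx0 : x 0 = 0 := by nlinarith [sq_nonneg (x 0)]
        funext i
        refine Fin.cases ?_ ?_ i
        · exact hx0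
        · intro j
          have h1 := congrFun h0 j
          rwa [SigAux.tailMap_apply, Pi.zero_apply] at h1
      · nlinarith [sq_nonneg (x 0 - x (Fin.succ 0))])
    have hnn2 := SigAux.nonnegCard_le hN hM (SigAux.consMap m) (by
      intro y hy hqy
      constructor
      · intro h0
        apply hy
        funext i
        have h1 : SigAux.consMap m y i.succ = 0 := congrFun h0 i.succ
        rwa [SigAux.consMap_succ_apply] at h1
      · rw [hconskey y]
        exact hqy)
    have hnegM := SigAux.negCard_add hM
    have hnegN := SigAux.negCard_add hN
    show sig (tri (m + 2) d) = -1 + sig N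
    simp only [sig]
    rw [dif_pos hM, dif_pos hN]
    omega
end
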